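/- arXiv:2512.22646 — 8 statements merged into one kernel-verified Lean document; each statement's English description precedes it below -/
import Mathlib

section
/- Let n ≥ 1 and let A : ℝ → Matrix (Fin n) (Fin n) ℝ, B : ℝ → Fin n → ℝ and C : ℝ → Fin n → ℝ be continuous on [0,∞). Suppose Φ : ℝ → ℝ → Matrix (Fin n) (Fin n) ℝ is a state-transition matrix for A, i.e. for every τ ≥ 0 one has Φ(τ,τ) = 1 (identity matrix), and for every fixed τ ≥ 0 the map t ↦ Φ(t,τ) is differentiable on [0,∞) with derivative A(t) * Φ(t,τ) at every t ≥ 0. Then for every T > 0 the impulse-response kernel g(t,τ) := C(t) ⬝ᵥ (Φ(t,τ) *ᵥ B(τ)) is (jointly) continuous on the triangular domain D_T := {(t,τ) ∈ ℝ × ℝ : 0 ≤ t ≤ T, 0 ≤ τ ≤ t}. (Paper's Lemma 3.) -/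
/-!
Joint continuity is not automatic, since `Φ` is only known to be differentiable in `t` for each
fixed `τ`. By uniqueness for the linear equation `x' = A x`, `Φ(t,τ) = Φ(t,0) Φ(0,τ)`: both sides
solve it with the value `Φ(0,τ)` at `t = 0`. Taking `t = τ` gives `Φ(0,τ) = Φ(τ,0)⁻¹`, so the
kernel is `C(t) ⬝ᵥ (Φ(t,0) Φ(τ,0)⁻¹ B(τ))`, built from continuous functions of `t` alone and of
`τ` alone.
-/

open Matrix Set

theorem ODE_solution_unique_of_linear_of_mem_Ici {E : Type*} [NormedAddCommGroup E]
    [NormedSpace ℝ E] {L : ℝ → E →L[ℝ] E} {f g : ℝ → E} {a : ℝ}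
    (hL : ContinuousOn L (Ici a))
    (hf : ∀ t ∈ Ici a, HasDerivWithinAt f (L t (f t)) (Ici a) t)
    (hg : ∀ t ∈ Ici a, HasDerivWithinAt g (L t (g t)) (Ici a) t)
    (ha : f a = g a) : EqOn f g (Ici a) := by
  intro b hb
  obtain ⟨K, hK⟩ := isCompact_Icc.exists_bound_of_continuousOn
    (hL.mono (Icc_subset_Ici_self : Icc a b ⊆ Ici a))
  have hLip : ∀ t ∈ Ico a b, LipschitzOnWith K.toNNReal (L t) univ := fun t ht =>
    ((L t).lipschitz.weaken <| by
      rw [← NNReal.coe_le_coe, coe_nnnorm]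
      exact (hK t (Ico_subset_Icc_self ht)).trans (Real.le_coe_toNNReal K)).lipschitzOnWith
  have hcont : ∀ {h : ℝ → E}, (∀ t ∈ Ici a, HasDerivWithinAt h (L t (h t)) (Ici a) t) →
      ContinuousOn h (Icc a b) := fun hh t ht =>
    (hh t ht.1).continuousWithinAt.mono Icc_subset_Ici_self
  exact ODE_solution_unique_of_mem_Icc_right (v := fun t => L t) hLip (hcont hf)
    (fun t ht => (hf t ht.1).mono (Ici_subset_Ici.2 ht.1)) (fun _ _ => mem_univ _) (hcont hg)
    (fun t ht => (hg t ht.1).mono (Ici_subset_Ici.2 ht.1)) (fun _ _ => mem_univ _) ha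
    ⟨hb, le_rfl⟩

theorem ContinuousOn.matrix_inv {X ι K : Type*} [TopologicalSpace X] [Fintype ι] [DecidableEq ι]
    [Field K] [TopologicalSpace K] [IsTopologicalRing K] [ContinuousInv₀ K]
    {M : X → Matrix ι ι K} {s : Set X} (hM : ContinuousOn M s) (hdet : ∀ x ∈ s, (M x).det ≠ 0) :
    ContinuousOn (fun x => (M x)⁻¹) s := fun x hx =>
  (continuousAt_matrix_inv _ (by rw [Ring.inverse_eq_inv']; exact continuousAt_inv₀ (hdet x hx))
    ).comp_continuousWithinAt (hM x hx)

theorem Matrix.hasDerivWithinAt_mulVec_const {ι κ : Type*} [Fintype κ] {M : ℝ → Matrix ι κ ℝ}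
    {M' : Matrix ι κ ℝ} {s : Set ℝ} {t : ℝ}
    (hM : ∀ i j, HasDerivWithinAt (fun u => M u i j) (M' i j) s t) (v : κ → ℝ) :
    HasDerivWithinAt (fun u => M u *ᵥ v) (M' *ᵥ v) s t :=
  hasDerivWithinAt_pi.2 fun i => HasDerivWithinAt.fun_sum fun j _ => (hM i j).mul_const (v j)

theorem Matrix.continuous_toContinuousLinearMap_toLin' {ι : Type*} [Fintype ι] [DecidableEq ι] :
    Continuous fun M : Matrix ι ι ℝ => LinearMap.toContinuousLinearMap (toLin' M) :=
  (LinearMap.toContinuousLinearMap.toLinearMap ∘ₗ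
    (toLin' : Matrix ι ι ℝ ≃ₗ[ℝ] _).toLinearMap).continuous_of_finiteDimensional

section StateTransition

variable {ι : Type*} [Fintype ι] {A : ℝ → Matrix ι ι ℝ} {Φ : ℝ → ℝ → Matrix ι ι ℝ}

def SolvesStateEquation (A : ℝ → Matrix ι ι ℝ) (Φ : ℝ → ℝ → Matrix ι ι ℝ) : Prop :=
  ∀ τ : ℝ, 0 ≤ τ → ∀ t : ℝ, 0 ≤ t → ∀ i j : ι,
    HasDerivWithinAt (fun s => Φ s τ i j) ((A t * Φ t τ) i j) (Ici 0) t

theorem SolvesStateEquation.continuousOn_left (hΦ : SolvesStateEquation A Φ) {τ : ℝ}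
    (hτ : 0 ≤ τ) : ContinuousOn (fun t => Φ t τ) (Ici 0) :=
  continuousOn_pi.2 fun i => continuousOn_pi.2 fun j => fun t ht =>
    (hΦ τ hτ t ht i j).continuousWithinAt

variable [DecidableEq ι]

theorem SolvesStateEquation.eq_mul (hΦ : SolvesStateEquation A Φ)
    (hA : ContinuousOn A (Ici 0)) (hΦ₀ : Φ 0 0 = 1) {t τ : ℝ} (ht : 0 ≤ t) (hτ : 0 ≤ τ) :
    Φ t τ = Φ t 0 * Φ 0 τ := by
  set L : ℝ → (ι → ℝ) →L[ℝ] ι → ℝ := fun s => LinearMap.toContinuousLinearMap (toLin' (A s))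
  have hsol : ∀ σ, 0 ≤ σ → ∀ v, ∀ s ∈ Ici (0 : ℝ),
      HasDerivWithinAt (fun u => Φ u σ *ᵥ v) (L s (Φ s σ *ᵥ v)) (Ici 0) s := by
    intro σ hσ v s hs
    simpa only [L, LinearMap.coe_toContinuousLinearMap', toLin'_apply, mulVec_mulVec] using
      hasDerivWithinAt_mulVec_const (hΦ σ hσ s hs) v
  refine ext_iff_mulVec.2 fun v => ?_
  rw [← mulVec_mulVec]
  refine ODE_solution_unique_of_linear_of_mem_Ici
    (continuous_toContinuousLinearMap_toLin'.comp_continuousOn hA)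
    (hsol τ hτ v) (hsol 0 le_rfl _) ?_ ht
  rw [hΦ₀, one_mulVec]

theorem SolvesStateEquation.mul_eq_one (hΦ : SolvesStateEquation A Φ)
    (hA : ContinuousOn A (Ici 0)) (hΦinit : ∀ τ : ℝ, 0 ≤ τ → Φ τ τ = 1) {τ : ℝ} (hτ : 0 ≤ τ) :
    Φ τ 0 * Φ 0 τ = 1 := by
  rw [← hΦ.eq_mul hA (hΦinit 0 le_rfl) hτ hτ, hΦinit τ hτ]

theorem SolvesStateEquation.continuousOn_right (hΦ : SolvesStateEquation A Φ)
    (hA : ContinuousOn A (Ici 0)) (hΦinit : ∀ τ : ℝ, 0 ≤ τ → Φ τ τ = 1) :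
    ContinuousOn (fun τ => Φ 0 τ) (Ici 0) := by
  have hinv := fun τ (hτ : τ ∈ Ici (0 : ℝ)) => hΦ.mul_eq_one hA hΦinit hτ
  exact ((hΦ.continuousOn_left le_rfl).matrix_inv
    fun τ hτ => det_ne_zero_of_right_inverse (hinv τ hτ)).congr
    fun τ hτ => (inv_eq_right_inv (hinv τ hτ)).symm

end StateTransition

theorem impulse_response_kernel_continuousOn_general
    (n : ℕ)
    (A : ℝ → Matrix (Fin n) (Fin n) ℝ) (B C : ℝ → Fin n → ℝ)
    (hA : ContinuousOn A (Ici 0))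
    (hB : ContinuousOn B (Ici 0))
    (hC : ContinuousOn C (Ici 0))
    (Φ : ℝ → ℝ → Matrix (Fin n) (Fin n) ℝ)
    (hΦinit : ∀ τ : ℝ, 0 ≤ τ → Φ τ τ = 1)
    (hΦderiv : ∀ τ : ℝ, 0 ≤ τ → ∀ t : ℝ, 0 ≤ t → ∀ i j : Fin n,
      HasDerivWithinAt (fun s => Φ s τ i j) ((A t * Φ t τ) i j) (Ici 0) t) :
    ∀ T : ℝ, 0 < T →
      ContinuousOn (fun p : ℝ × ℝ => C p.1 ⬝ᵥ (Φ p.1 p.2 *ᵥ B p.2))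
        {p : ℝ × ℝ | 0 ≤ p.1 ∧ p.1 ≤ T ∧ 0 ≤ p.2 ∧ p.2 ≤ p.1} := by
  intro T _
  have hΦ : SolvesStateEquation A Φ := hΦderiv
  set D := {p : ℝ × ℝ | 0 ≤ p.1 ∧ p.1 ≤ T ∧ 0 ≤ p.2 ∧ p.2 ≤ p.1}
  have hfst : MapsTo Prod.fst D (Ici 0) := fun p hp => hp.1
  have hsnd : MapsTo Prod.snd D (Ici 0) := fun p hp => hp.2.2.1
  have hkernel : Continuous fun q : (Fin n → ℝ) × Matrix (Fin n) (Fin n) ℝ ×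
      Matrix (Fin n) (Fin n) ℝ × (Fin n → ℝ) => q.1 ⬝ᵥ ((q.2.1 * q.2.2.1) *ᵥ q.2.2.2) := by
    fun_prop
  refine (hkernel.comp_continuousOn <| (hC.comp continuousOn_fst hfst).prodMk <|
    ((hΦ.continuousOn_left le_rfl).comp continuousOn_fst hfst).prodMk <|
    ((hΦ.continuousOn_right hA hΦinit).comp continuousOn_snd hsnd).prodMk <|
    hB.comp continuousOn_snd hsnd).congr fun p hp => ?_
  simp only [Function.comp_apply]
  rw [← hΦ.eq_mul hA (hΦinit 0 le_rfl) hp.1 hp.2.2.1]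

/-- **Paper's Lemma 3.** If `A`, `B`, `C` are continuous on `[0,∞)` and `Φ` is a
state-transition matrix for `A` (i.e. `Φ(τ,τ) = 1` and, entrywise,
`∂Φ(t,τ)/∂t = A(t) Φ(t,τ)` on `[0,∞)` for each fixed `τ ≥ 0`), then for every `T > 0`
the impulse-response kernel `g(t,τ) = C(t) ⬝ᵥ (Φ(t,τ) *ᵥ B(τ))` is jointly continuous on
the triangular domain `D_T = {(t,τ) : 0 ≤ t ≤ T, 0 ≤ τ ≤ t}`. -/
theorem impulse_response_kernel_continuousOn
    (n : ℕ) (hn : 1 ≤ n)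
    (A : ℝ → Matrix (Fin n) (Fin n) ℝ) (B C : ℝ → Fin n → ℝ)
    (hA : ContinuousOn A (Ici 0))
    (hB : ContinuousOn B (Ici 0))
    (hC : ContinuousOn C (Ici 0))
    (Φ : ℝ → ℝ → Matrix (Fin n) (Fin n) ℝ)
    (hΦinit : ∀ τ : ℝ, 0 ≤ τ → Φ τ τ = 1)
    (hΦderiv : ∀ τ : ℝ, 0 ≤ τ → ∀ t : ℝ, 0 ≤ t → ∀ i j : Fin n,
      HasDerivWithinAt (fun s => Φ s τ i j) ((A t * Φ t τ) i j) (Ici 0) t) :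
    ∀ T : ℝ, 0 < T →
      ContinuousOn (fun p : ℝ × ℝ => C p.1 ⬝ᵥ (Φ p.1 p.2 *ᵥ B p.2))
        {p : ℝ × ℝ | 0 ≤ p.1 ∧ p.1 ≤ T ∧ 0 ≤ p.2 ∧ p.2 ≤ p.1} :=
  impulse_response_kernel_continuousOn_general n A B C hA hB hC Φ hΦinit hΦderiv
end

section
/- Let q ≥ 1 be a natural number and let g_c, G_cp : ℝ → ℝ → ℝ be kernels, each continuous on the triangular domain D_T := {(t,τ) : 0 ≤ t ≤ T, 0 ≤ τ ≤ t} for every T > 0, satisfying G_cp(t,τ) ≥ g_c(t,τ) ≥ 0 for all 0 ≤ τ ≤ t. Assume there exists M ≥ 0 such that for all t ≥ 0, ∫₀ᵗ ( ∫_σ^t G_cp(t,τ)·(τ−σ)^(q−1)/(q−1)! dτ ) dσ ≤ M. Then there exists M' ≥ 0 such that for all t ≥ 0, ∫₀ᵗ g_c(t,τ)·τ^q dτ ≤ M'. (Paper's Lemma 5(a).) -/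
open intervalIntegral Set

/-- A kernel `g : ℝ → ℝ → ℝ` is continuous on the triangular domain
`D_T = {(t,τ) : 0 ≤ t ≤ T, 0 ≤ τ ≤ t}` for every `T > 0`. -/
def ContinuousOnTriangles (g : ℝ → ℝ → ℝ) : Prop :=
  ∀ T : ℝ, 0 < T →
    ContinuousOn (fun p : ℝ × ℝ => g p.1 p.2)
      {p : ℝ × ℝ | 0 ≤ p.1 ∧ p.1 ≤ T ∧ 0 ≤ p.2 ∧ p.2 ≤ p.1}

/-!
The moment `∫₀ᵗ g_c(t,τ) τ^q dτ` is at most `∫₀ᵗ G_cp(t,τ) τ^q dτ`, and exchanging the order of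
integration over the triangle `0 ≤ σ ≤ τ ≤ t` shows that the latter is `q!` times the iterated
integral of the composed kernel, since `∫₀^τ (τ-σ)^(q-1)/(q-1)! dσ = τ^q/q!`. Hence `q! M` bounds
the moment.
-/

open MeasureTheory Function
open scoped Nat

theorem integral_integral_triangle_swap {F : ℝ → ℝ → ℝ} {a b : ℝ} (hab : a ≤ b)
    (hF : IntegrableOn (uncurry F) (Icc a b ×ˢ Icc a b)) :
    ∫ σ in a..b, ∫ τ in σ..b, F σ τ = ∫ τ in a..b, ∫ σ in a..τ, F σ τ := by
  set K : ℝ × ℝ → ℝ := {p | p.1 ≤ p.2}.indicator (uncurry F)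
  have hK : IntegrableOn K (uIoc a b ×ˢ uIoc a b) := by
    rw [uIoc_of_le hab]
    exact (hF.mono_set (prod_mono Ioc_subset_Icc_self Ioc_subset_Icc_self)).indicator
      (measurableSet_le measurable_fst measurable_snd)
  have hrow : ∀ σ ∈ Ioc a b, ∫ τ in σ..b, F σ τ = ∫ τ in a..b, K (σ, τ) := by
    intro σ hσ
    have hset : Ioc a b ∩ Ici σ = Icc σ b := by
      ext τ; simp only [mem_inter_iff, mem_Ioc, mem_Ici, mem_Icc]
      constructor
      · rintro ⟨⟨-, hτb⟩, hστ⟩; exact ⟨hστ, hτb⟩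
      · rintro ⟨hστ, hτb⟩; exact ⟨⟨hσ.1.trans_le hστ, hτb⟩, hστ⟩
    have hKσ : (fun τ => K (σ, τ)) = (Ici σ).indicator (F σ) := by
      ext τ; simp [K, indicator_apply]
    rw [hKσ, integral_of_le hσ.2, integral_of_le hab, setIntegral_indicator measurableSet_Ici,
      hset, integral_Icc_eq_integral_Ioc]
  have hcol : ∀ τ ∈ Icc a b, ∫ σ in a..τ, F σ τ = ∫ σ in a..b, K (σ, τ) := by
    intro τ hτ
    rw [← integral_indicator hτ]
    rfl
  calc ∫ σ in a..b, ∫ τ in σ..b, F σ τ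
      = ∫ σ in a..b, ∫ τ in a..b, K (σ, τ) :=
        integral_congr_ae (ae_of_all _ fun σ hσ => hrow σ (by rwa [uIoc_of_le hab] at hσ))
    _ = ∫ τ in a..b, ∫ σ in a..b, K (σ, τ) := intervalIntegral_intervalIntegral_swap hK
    _ = ∫ τ in a..b, ∫ σ in a..τ, F σ τ :=
        integral_congr fun τ hτ => (hcol τ (by rwa [uIcc_of_le hab] at hτ)).symm

theorem integral_sub_pow_div_factorial (n : ℕ) (a τ : ℝ) :
    ∫ σ in a..τ, (τ - σ) ^ n / (n ! : ℝ) = (τ - a) ^ (n + 1) / ((n + 1)! : ℝ) := by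
  rw [intervalIntegral.integral_div, integral_comp_sub_left (fun x => x ^ n), integral_pow,
    Nat.factorial_succ]
  push_cast
  field_simp
  ring

theorem integral_integral_mul_sub_pow_div_factorial {f : ℝ → ℝ} {a b : ℝ} (hab : a ≤ b)
    (hf : ContinuousOn f (Icc a b)) (n : ℕ) :
    ∫ σ in a..b, ∫ τ in σ..b, f τ * (τ - σ) ^ n / (n ! : ℝ)
      = ∫ τ in a..b, f τ * (τ - a) ^ (n + 1) / ((n + 1)! : ℝ) := by
  have hcont : ContinuousOn (uncurry fun σ τ => f τ * (τ - σ) ^ n / (n ! : ℝ))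
      (Icc a b ×ˢ Icc a b) :=
    ((hf.comp continuousOn_snd fun _ hp => hp.2).mul (by fun_prop)).div_const _
  rw [integral_integral_triangle_swap hab (hcont.integrableOn_compact
    (isCompact_Icc.prod isCompact_Icc))]
  refine integral_congr fun τ _ => ?_
  simp only [mul_div_assoc, intervalIntegral.integral_const_mul, integral_sub_pow_div_factorial]

theorem ContinuousOnTriangles.continuousOn_section {g : ℝ → ℝ → ℝ}
    (hg : ContinuousOnTriangles g) {t : ℝ} (ht : 0 ≤ t) : ContinuousOn (g t) (Icc 0 t) := by
  rcases ht.eq_or_lt with rfl | ht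
  · simp only [Icc_self, continuousOn_singleton]
  · exact (hg t ht).comp (continuousOn_const.prodMk continuousOn_id)
      fun τ hτ => ⟨ht.le, le_rfl, hτ.1, hτ.2⟩

theorem moment_integral_bounded_general
    (q : ℕ) (hq : 1 ≤ q)
    (g_c G_cp : ℝ → ℝ → ℝ)
    (hGcp_cont : ContinuousOnTriangles G_cp)
    (hnonneg : ∀ t τ : ℝ, 0 ≤ τ → τ ≤ t → 0 ≤ g_c t τ)
    (hdom : ∀ t τ : ℝ, 0 ≤ τ → τ ≤ t → g_c t τ ≤ G_cp t τ)
    (M : ℝ) (hM : 0 ≤ M)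
    (hbound : ∀ t : ℝ, 0 ≤ t →
      (∫ σ in (0:ℝ)..t, ∫ τ in σ..t,
        G_cp t τ * (τ - σ) ^ (q - 1) / (Nat.factorial (q - 1) : ℝ)) ≤ M) :
    ∃ M' : ℝ, 0 ≤ M' ∧ ∀ t : ℝ, 0 ≤ t →
      (∫ τ in (0:ℝ)..t, g_c t τ * τ ^ q) ≤ M' := by
  obtain ⟨n, rfl⟩ : ∃ n, q = n + 1 := ⟨q - 1, by omega⟩
  refine ⟨(n + 1)! * M, by positivity, fun t ht => ?_⟩
  have hG := hGcp_cont.continuousOn_section ht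
  have hmono : ∫ τ in (0:ℝ)..t, g_c t τ * τ ^ (n + 1)
      ≤ ∫ τ in (0:ℝ)..t, G_cp t τ * τ ^ (n + 1) := by
    rw [integral_of_le ht, integral_of_le ht]
    refine setIntegral_mono_of_nonneg (fun τ hτ => ?_) (fun τ hτ => ?_)
      ((hG.mul (continuousOn_pow _)).integrableOn_Icc.mono_set Ioc_subset_Icc_self)
    · exact mul_nonneg (hnonneg t τ hτ.1.le hτ.2) (pow_nonneg hτ.1.le _)
    · exact mul_le_mul_of_nonneg_right (hdom t τ hτ.1.le hτ.2) (pow_nonneg hτ.1.le _)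
  calc ∫ τ in (0:ℝ)..t, g_c t τ * τ ^ (n + 1)
      ≤ ∫ τ in (0:ℝ)..t, G_cp t τ * τ ^ (n + 1) := hmono
    _ = (n + 1)! * ∫ τ in (0:ℝ)..t, G_cp t τ * τ ^ (n + 1) / ((n + 1)! : ℝ) := by
        rw [← intervalIntegral.integral_const_mul]
        refine integral_congr fun τ _ => ?_
        field_simp
    _ = (n + 1)! * ∫ σ in (0:ℝ)..t, ∫ τ in σ..t, G_cp t τ * (τ - σ) ^ n / (n ! : ℝ) := by
        rw [integral_integral_mul_sub_pow_div_factorial ht hG]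
        simp only [sub_zero]
    _ ≤ (n + 1)! * M := by
        gcongr
        simpa using hbound t ht

/-- **Paper's Lemma 5(a).** If `0 ≤ g_c ≤ G_cp` on the triangle and the iterated integral
`∫₀ᵗ ∫_σ^t G_cp(t,τ) (τ-σ)^(q-1)/(q-1)! dτ dσ` is uniformly bounded, then the moment
integral `∫₀ᵗ g_c(t,τ) τ^q dτ` is uniformly bounded. -/
theorem moment_integral_bounded
    (q : ℕ) (hq : 1 ≤ q)
    (g_c G_cp : ℝ → ℝ → ℝ)
    (hgc_cont : ContinuousOnTriangles g_c)
    (hGcp_cont : ContinuousOnTriangles G_cp)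
    (hnonneg : ∀ t τ : ℝ, 0 ≤ τ → τ ≤ t → 0 ≤ g_c t τ)
    (hdom : ∀ t τ : ℝ, 0 ≤ τ → τ ≤ t → g_c t τ ≤ G_cp t τ)
    (M : ℝ) (hM : 0 ≤ M)
    (hbound : ∀ t : ℝ, 0 ≤ t →
      (∫ σ in (0:ℝ)..t, ∫ τ in σ..t,
        G_cp t τ * (τ - σ) ^ (q - 1) / (Nat.factorial (q - 1) : ℝ)) ≤ M) :
    ∃ M' : ℝ, 0 ≤ M' ∧ ∀ t : ℝ, 0 ≤ t →
      (∫ τ in (0:ℝ)..t, g_c t τ * τ ^ q) ≤ M' :=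
  moment_integral_bounded_general q hq g_c G_cp hGcp_cont hnonneg hdom M hM hbound
end

section
/- Let q ≥ 1 be a natural number and g : ℝ → ℝ → ℝ a kernel, continuous on the triangular domain D_T := {(t,τ) : 0 ≤ t ≤ T, 0 ≤ τ ≤ t} for every T > 0, with g(t,τ) ≥ 0 for all 0 ≤ τ ≤ t. Assume: (i) for every T > 0, ∫₀ᵀ ( ∫_σ^t g(t,τ)·(τ−σ)^(q−1)/(q−1)! dτ ) dσ → 0 as t → ∞; (ii) there exists M₂ ≥ 0 with ∫₀ᵗ g(t,τ)·τ^q dτ ≤ M₂ for all t ≥ 0; (iii) there exists M₁ ≥ 0 with ∫₀^(min(t,1)) g(t,τ) dτ ≤ M₁ for all t ≥ 0; (iv) lim_{T→0⁺} sup_{t ≥ 0} ∫₀^(min(t,T)) g(t,τ) dτ = 0. Then lim_{t→∞} ∫₀ᵗ g(t,τ)·τ^(q−1) dτ = 0. (Paper's Lemma 7(a).) -/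
/-!
Split `∫₀ᵗ g(t,τ) τ^(q-1) dτ` at `2a` with `a` small. On `[0, 2a] ⊆ [0, 1]` we have
`τ^(q-1) ≤ 1`, so (iv) makes the head small uniformly in `t`. On the tail `τ ≥ 2a` we have
`τ ≤ 2 (τ - σ)` for all `σ ∈ [0, a]`, so averaging over `σ ∈ [0, a]` bounds the tail by
`2^(q-1) / a` times the iterated integral of (i), which tends to `0`. The inner integral is
antitone in `σ` because `g ≥ 0`, which also makes it integrable in `σ`.
-/

open intervalIntegral Set Filter

lemma ContinuousOnTriangles.continuousOn_slice {g : ℝ → ℝ → ℝ} (hg : ContinuousOnTriangles g)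
    {t : ℝ} (ht : 0 < t) : ContinuousOn (g t) (Icc 0 t) :=
  (hg t ht).comp (continuous_const.prodMk continuous_id).continuousOn
    fun _ hτ => ⟨ht.le, le_rfl, hτ.1, hτ.2⟩

lemma integral_mul_pow_le_integral {f : ℝ → ℝ} {b : ℝ} (n : ℕ) (hb : 0 ≤ b) (hb1 : b ≤ 1)
    (hf : ContinuousOn f (Icc 0 b)) (hf0 : ∀ τ ∈ Icc 0 b, 0 ≤ f τ) :
    ∫ τ in (0:ℝ)..b, f τ * τ ^ n ≤ ∫ τ in (0:ℝ)..b, f τ :=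
  integral_mono_on hb ((hf.mul (continuous_pow n).continuousOn).intervalIntegrable_of_Icc hb)
    (hf.intervalIntegrable_of_Icc hb) fun τ hτ =>
      mul_le_of_le_one_right (hf0 τ hτ) (pow_le_one₀ hτ.1 (hτ.2.trans hb1))

lemma antitoneOn_integral_mul_pow_sub {f : ℝ → ℝ} {s t : ℝ} (n : ℕ)
    (hf : ContinuousOn f (Icc s t)) (hf0 : ∀ τ ∈ Icc s t, 0 ≤ f τ) :
    AntitoneOn (fun σ => ∫ τ in σ..t, f τ * (τ - σ) ^ n) (Icc s t) := by
  intro σ₁ hσ₁ σ₂ hσ₂ hσ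
  have hcont : ContinuousOn (fun τ => f τ * (τ - σ₁) ^ n) (Icc σ₁ t) :=
    (hf.mono (Icc_subset_Icc_left hσ₁.1)).mul
      ((continuous_id.sub continuous_const).pow n).continuousOn
  have hcont₂ : ContinuousOn (fun τ => f τ * (τ - σ₂) ^ n) (Icc σ₂ t) :=
    (hf.mono (Icc_subset_Icc_left hσ₂.1)).mul
      ((continuous_id.sub continuous_const).pow n).continuousOn
  calc ∫ τ in σ₂..t, f τ * (τ - σ₂) ^ n
      ≤ ∫ τ in σ₂..t, f τ * (τ - σ₁) ^ n :=
        integral_mono_on hσ₂.2 (hcont₂.intervalIntegrable_of_Icc hσ₂.2)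
          ((hcont.mono (Icc_subset_Icc_left hσ)).intervalIntegrable_of_Icc hσ₂.2)
          fun τ hτ => mul_le_mul_of_nonneg_left
            (pow_le_pow_left₀ (by linarith [hτ.1]) (by linarith) n)
            (hf0 τ ⟨hσ₂.1.trans hτ.1, hτ.2⟩)
    _ ≤ ∫ τ in σ₁..t, f τ * (τ - σ₁) ^ n :=
        integral_mono_interval hσ hσ₂.2 le_rfl
          (MeasureTheory.ae_restrict_of_forall_mem measurableSet_Ioc fun τ hτ =>
            mul_nonneg (hf0 τ ⟨hσ₁.1.trans hτ.1.le, hτ.2⟩) (pow_nonneg (by linarith [hτ.1]) n))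
          (hcont.intervalIntegrable_of_Icc (hσ.trans hσ₂.2))

lemma mul_integral_mul_pow_le_integral_integral {f : ℝ → ℝ} {a t : ℝ} (n : ℕ) (ha : 0 ≤ a)
    (hat : 2 * a ≤ t) (hf : ContinuousOn f (Icc 0 t)) (hf0 : ∀ τ ∈ Icc 0 t, 0 ≤ f τ) :
    a * ∫ τ in (2 * a)..t, f τ * τ ^ n ≤
      2 ^ n * ∫ σ in (0:ℝ)..a, ∫ τ in σ..t, f τ * (τ - σ) ^ n := by
  set F := fun σ => ∫ τ in σ..t, f τ * (τ - σ) ^ n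
  have hF : AntitoneOn F (Icc 0 a) :=
    (antitoneOn_integral_mul_pow_sub n hf hf0).mono (Icc_subset_Icc_right (by linarith))
  have hlow : a * F a ≤ ∫ σ in (0:ℝ)..a, F σ := by
    simpa using integral_mono_on (μ := MeasureTheory.volume) ha intervalIntegrable_const
      ((hF.mono (uIcc_of_le ha).subset).intervalIntegrable) fun σ hσ => hF hσ ⟨ha, le_rfl⟩ hσ.2
  have hcont : ContinuousOn (fun τ => f τ * (τ - a) ^ n) (Icc 0 t) :=
    hf.mul ((continuous_id.sub continuous_const).pow n).continuousOn
  have htail : ∫ τ in (2 * a)..t, f τ * τ ^ n ≤ 2 ^ n * F a :=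
    calc ∫ τ in (2 * a)..t, f τ * τ ^ n
        ≤ ∫ τ in (2 * a)..t, 2 ^ n * (f τ * (τ - a) ^ n) := by
          refine integral_mono_on hat ?_ ?_ fun τ hτ => ?_
          · exact ((hf.mono (Icc_subset_Icc_left (by linarith))).mul
              (continuous_pow n).continuousOn).intervalIntegrable_of_Icc hat
          · exact ((hcont.mono (Icc_subset_Icc_left (by linarith))).const_mul _
              ).intervalIntegrable_of_Icc hat
          · have hτ0 : 0 ≤ τ := by linarith [hτ.1]
            calc f τ * τ ^ n ≤ f τ * (2 * (τ - a)) ^ n := by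
                  gcongr
                  · exact hf0 τ ⟨hτ0, hτ.2⟩
                  · linarith [hτ.1]
              _ = 2 ^ n * (f τ * (τ - a) ^ n) := by rw [mul_pow]; ring
      _ = 2 ^ n * ∫ τ in (2 * a)..t, f τ * (τ - a) ^ n := integral_const_mul _ _
      _ ≤ 2 ^ n * F a := by
          gcongr
          exact integral_mono_interval (by linarith) hat le_rfl
            (MeasureTheory.ae_restrict_of_forall_mem measurableSet_Ioc fun τ hτ =>
              mul_nonneg (hf0 τ ⟨ha.trans hτ.1.le, hτ.2⟩) (pow_nonneg (by linarith [hτ.1]) n))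
            ((hcont.mono (Icc_subset_Icc_left ha)).intervalIntegrable_of_Icc (by linarith))
  calc a * ∫ τ in (2 * a)..t, f τ * τ ^ n ≤ a * (2 ^ n * F a) := by gcongr
    _ = 2 ^ n * (a * F a) := by ring
    _ ≤ 2 ^ n * ∫ σ in (0:ℝ)..a, F σ := by gcongr

lemma integral_mul_pow_le_integral_add {f : ℝ → ℝ} {a t : ℝ} (n : ℕ) (ha : 0 < a)
    (ha1 : 2 * a ≤ 1) (hat : 2 * a ≤ t) (hf : ContinuousOn f (Icc 0 t))
    (hf0 : ∀ τ ∈ Icc 0 t, 0 ≤ f τ) :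
    ∫ τ in (0:ℝ)..t, f τ * τ ^ n ≤ (∫ τ in (0:ℝ)..(2 * a), f τ) +
      2 ^ n / a * ∫ σ in (0:ℝ)..a, ∫ τ in σ..t, f τ * (τ - σ) ^ n := by
  have hsub : Icc 0 (2 * a) ⊆ Icc 0 t := Icc_subset_Icc_right hat
  have hcont : ContinuousOn (fun τ => f τ * τ ^ n) (Icc 0 t) :=
    hf.mul (continuous_pow n).continuousOn
  rw [← integral_add_adjacent_intervals (b := 2 * a)
    ((hcont.mono hsub).intervalIntegrable_of_Icc (by linarith))
    ((hcont.mono (Icc_subset_Icc_left (by linarith))).intervalIntegrable_of_Icc hat)]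
  refine add_le_add
    (integral_mul_pow_le_integral n (by linarith) ha1 (hf.mono hsub) fun τ hτ => hf0 τ (hsub hτ)) ?_
  rw [div_mul_eq_mul_div, le_div_iff₀' ha]
  exact mul_integral_mul_pow_le_integral_integral n ha.le hat hf hf0

theorem moment_integral_tendsto_zero_general
    (q : ℕ)
    (g : ℝ → ℝ → ℝ)
    (hg_cont : ContinuousOnTriangles g)
    (hnonneg : ∀ t τ : ℝ, 0 ≤ τ → τ ≤ t → 0 ≤ g t τ)
    -- (i)
    (hAS : ∀ T : ℝ, 0 < T →
      Tendsto (fun t : ℝ => ∫ σ in (0:ℝ)..T, ∫ τ in σ..t,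
          g t τ * (τ - σ) ^ (q - 1) / (Nat.factorial (q - 1) : ℝ))
        atTop (nhds 0))
    -- (iv)
    (hsmall : ∀ ε : ℝ, 0 < ε → ∃ T₀ : ℝ, 0 < T₀ ∧
      ∀ T : ℝ, 0 < T → T < T₀ → ∀ t : ℝ, 0 ≤ t →
        (∫ τ in (0:ℝ)..(min t T), g t τ) < ε) :
    Tendsto (fun t : ℝ => ∫ τ in (0:ℝ)..t, g t τ * τ ^ (q - 1)) atTop (nhds 0) := by
  refine Metric.tendsto_nhds.2 fun ε hε => ?_
  obtain ⟨T₀, hT₀, hhead⟩ := hsmall (ε / 2) (half_pos hε)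
  set a := min T₀ 1 / 4 with ha_def
  have ha : 0 < a := by positivity
  have haT₀ : 2 * a < T₀ := by linarith [min_le_left T₀ 1, ha_def]
  have ha1 : 2 * a ≤ 1 := by linarith [min_le_right T₀ 1, ha_def]
  have htail : ∀ᶠ t in atTop,
      2 ^ (q - 1) / a * ∫ σ in (0:ℝ)..a, ∫ τ in σ..t, g t τ * (τ - σ) ^ (q - 1) < ε / 2 := by
    have h := (hAS a ha).const_mul ((q - 1).factorial * (2 ^ (q - 1) / a) : ℝ)
    rw [mul_zero] at h
    refine (h.congr fun t => ?_).eventually (gt_mem_nhds (half_pos hε))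
    have hfact : ((q - 1).factorial : ℝ) ≠ 0 := by positivity
    simp only [integral_div]
    field_simp
  filter_upwards [htail, eventually_ge_atTop (2 * a)] with t htail_t ht
  have ht0 : 0 < t := by linarith
  have hf0 : ∀ τ ∈ Icc 0 t, 0 ≤ g t τ := fun τ hτ => hnonneg t τ hτ.1 hτ.2
  have hhead_t := hhead (2 * a) (by positivity) haT₀ t ht0.le
  rw [min_eq_right ht] at hhead_t
  rw [Real.dist_0_eq_abs, abs_of_nonneg (integral_nonneg ht0.le fun τ hτ =>
    mul_nonneg (hf0 τ hτ) (pow_nonneg hτ.1 _))]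
  have := integral_mul_pow_le_integral_add (q - 1) ha ha1 ht (hg_cont.continuousOn_slice ht0) hf0
  linarith

/-- **Paper's Lemma 7(a).** Under (i) the vanishing of the truncated iterated integral
of the composed kernel, (ii) uniform boundedness of the `q`-th moment integral,
(iii) uniform boundedness of the kernel integral near `τ = 0`, and (iv) the uniform
small-`T` vanishing condition, the `(q-1)`-th moment integral tends to `0` as `t → ∞`. -/
theorem moment_integral_tendsto_zero
    (q : ℕ) (hq : 1 ≤ q)
    (g : ℝ → ℝ → ℝ)
    (hg_cont : ContinuousOnTriangles g)
    (hnonneg : ∀ t τ : ℝ, 0 ≤ τ → τ ≤ t → 0 ≤ g t τ)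
    -- (i)
    (hAS : ∀ T : ℝ, 0 < T →
      Tendsto (fun t : ℝ => ∫ σ in (0:ℝ)..T, ∫ τ in σ..t,
          g t τ * (τ - σ) ^ (q - 1) / (Nat.factorial (q - 1) : ℝ))
        atTop (nhds 0))
    -- (ii)
    (M₂ : ℝ) (hM₂ : 0 ≤ M₂)
    (hbound₂ : ∀ t : ℝ, 0 ≤ t → (∫ τ in (0:ℝ)..t, g t τ * τ ^ q) ≤ M₂)
    -- (iii)
    (M₁ : ℝ) (hM₁ : 0 ≤ M₁)
    (hbound₁ : ∀ t : ℝ, 0 ≤ t → (∫ τ in (0:ℝ)..(min t 1), g t τ) ≤ M₁)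
    -- (iv)
    (hsmall : ∀ ε : ℝ, 0 < ε → ∃ T₀ : ℝ, 0 < T₀ ∧
      ∀ T : ℝ, 0 < T → T < T₀ → ∀ t : ℝ, 0 ≤ t →
        (∫ τ in (0:ℝ)..(min t T), g t τ) < ε) :
    Tendsto (fun t : ℝ => ∫ τ in (0:ℝ)..t, g t τ * τ ^ (q - 1)) atTop (nhds 0) :=
  moment_integral_tendsto_zero_general q g hg_cont hnonneg hAS hsmall
end

section
/- Let q ≥ 1 and a be natural numbers with a ≤ q − 1, and let g : ℝ → ℝ → ℝ be a kernel, continuous on the triangular domain D_T := {(t,τ) : 0 ≤ t ≤ T, 0 ≤ τ ≤ t} for every T > 0, with g(t,τ) ≥ 0 for all 0 ≤ τ ≤ t. Assume: (i) lim_{t→∞} ∫₀^(min(t,1)) g(t,τ) dτ = 0, and (ii) lim_{t→∞} ∫₀ᵗ g(t,τ)·τ^(q−1) dτ = 0. Then lim_{t→∞} ∫₀ᵗ g(t,τ)·τ^a dτ = 0. (Paper's Lemma 7(b).) -/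
open intervalIntegral Set Filter

lemma cont_slice (g : ℝ → ℝ → ℝ) (hg : ContinuousOnTriangles g) {t : ℝ} (ht : 0 < t) :
    ContinuousOn (fun τ => g t τ) (Icc 0 t) := by
  have h := hg t ht
  have hmap : MapsTo (fun τ : ℝ => (t, τ)) (Icc 0 t)
      {p : ℝ × ℝ | 0 ≤ p.1 ∧ p.1 ≤ t ∧ 0 ≤ p.2 ∧ p.2 ≤ p.1} := by
    intro τ hτ; exact ⟨ht.le, le_refl t, hτ.1, hτ.2⟩
  exact h.comp ((continuous_const.prodMk continuous_id).continuousOn) hmap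

/-- **Paper's Lemma 7(b).** If `∫₀^(min(t,1)) g(t,τ) dτ → 0` and
`∫₀ᵗ g(t,τ) τ^(q-1) dτ → 0` as `t → ∞`, then for any `a ≤ q - 1`,
`∫₀ᵗ g(t,τ) τ^a dτ → 0` as `t → ∞`. -/
theorem lower_moment_integral_tendsto_zero
    (q a : ℕ) (hq : 1 ≤ q) (haq : a ≤ q - 1)
    (g : ℝ → ℝ → ℝ)
    (hg_cont : ContinuousOnTriangles g)
    (hnonneg : ∀ t τ : ℝ, 0 ≤ τ → τ ≤ t → 0 ≤ g t τ)
    (hlim₁ : Tendsto (fun t : ℝ => ∫ τ in (0:ℝ)..(min t 1), g t τ) atTop (nhds 0))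
    (hlim₂ : Tendsto (fun t : ℝ => ∫ τ in (0:ℝ)..t, g t τ * τ ^ (q - 1)) atTop (nhds 0)) :
    Tendsto (fun t : ℝ => ∫ τ in (0:ℝ)..t, g t τ * τ ^ a) atTop (nhds 0) := by
  have hG : Tendsto (fun t : ℝ => (∫ τ in (0:ℝ)..(min t 1), g t τ)
      + ∫ τ in (0:ℝ)..t, g t τ * τ ^ (q - 1)) atTop (nhds 0) := by
    have := hlim₁.add hlim₂
    simpa using this
  refine squeeze_zero' ?_ ?_ hG
  · filter_upwards [eventually_ge_atTop (1 : ℝ)] with t ht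
    have ht0 : (0:ℝ) ≤ t := le_trans zero_le_one ht
    refine intervalIntegral.integral_nonneg ht0 (fun τ hτ => ?_)
    exact mul_nonneg (hnonneg t τ hτ.1 hτ.2) (pow_nonneg hτ.1 a)
  · filter_upwards [eventually_ge_atTop (1 : ℝ)] with t ht
    have ht0 : (0:ℝ) < t := lt_of_lt_of_le one_pos ht
    have hc := cont_slice g hg_cont ht0
    have hint : ∀ k : ℕ, IntervalIntegrable (fun τ => g t τ * τ ^ k) MeasureTheory.volume 0 t := by
      intro k
      apply ContinuousOn.intervalIntegrable
      rw [uIcc_of_le ht0.le]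
      exact hc.mul (continuous_pow k).continuousOn
    have hsub1 : uIcc (0:ℝ) 1 ⊆ uIcc (0:ℝ) t := by
      rw [uIcc_of_le ht0.le, uIcc_of_le zero_le_one]
      exact Icc_subset_Icc le_rfl ht
    have hsub2 : uIcc (1:ℝ) t ⊆ uIcc (0:ℝ) t := by
      rw [uIcc_of_le ht0.le, uIcc_of_le ht]
      exact Icc_subset_Icc zero_le_one le_rfl
    have hintg : IntervalIntegrable (fun τ => g t τ) MeasureTheory.volume 0 1 := by
      apply ContinuousOn.intervalIntegrable
      rw [uIcc_of_le zero_le_one]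
      exact hc.mono (Icc_subset_Icc le_rfl ht)
    have hsplit : (∫ τ in (0:ℝ)..t, g t τ * τ ^ a)
        = (∫ τ in (0:ℝ)..1, g t τ * τ ^ a) + ∫ τ in (1:ℝ)..t, g t τ * τ ^ a :=
      (intervalIntegral.integral_add_adjacent_intervals ((hint a).mono_set hsub1)
        ((hint a).mono_set hsub2)).symm
    rw [hsplit, min_eq_right ht]
    have hb1 : (∫ τ in (0:ℝ)..1, g t τ * τ ^ a) ≤ ∫ τ in (0:ℝ)..1, g t τ := by
      refine intervalIntegral.integral_mono_on zero_le_one ((hint a).mono_set hsub1) hintg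
        (fun τ hτ => ?_)
      have hgn := hnonneg t τ hτ.1 (le_trans hτ.2 ht)
      exact mul_le_of_le_one_right hgn (pow_le_one₀ hτ.1 hτ.2)
    have hb2 : (∫ τ in (1:ℝ)..t, g t τ * τ ^ a)
        ≤ ∫ τ in (1:ℝ)..t, g t τ * τ ^ (q - 1) := by
      refine intervalIntegral.integral_mono_on ht ((hint a).mono_set hsub2)
        ((hint (q-1)).mono_set hsub2) (fun τ hτ => ?_)
      have hgn := hnonneg t τ (le_trans zero_le_one hτ.1) hτ.2
      exact mul_le_mul_of_nonneg_left (pow_le_pow_right₀ hτ.1 haq) hgn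
    have hb3 : (∫ τ in (1:ℝ)..t, g t τ * τ ^ (q - 1))
        ≤ ∫ τ in (0:ℝ)..t, g t τ * τ ^ (q - 1) := by
      have hsplit2 : (∫ τ in (0:ℝ)..t, g t τ * τ ^ (q-1))
          = (∫ τ in (0:ℝ)..1, g t τ * τ ^ (q-1)) + ∫ τ in (1:ℝ)..t, g t τ * τ ^ (q-1) :=
        (intervalIntegral.integral_add_adjacent_intervals ((hint (q-1)).mono_set hsub1)
          ((hint (q-1)).mono_set hsub2)).symm
      have hnn : (0:ℝ) ≤ ∫ τ in (0:ℝ)..1, g t τ * τ ^ (q-1) := by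
        refine intervalIntegral.integral_nonneg zero_le_one (fun τ hτ => ?_)
        exact mul_nonneg (hnonneg t τ hτ.1 (le_trans hτ.2 ht)) (pow_nonneg hτ.1 _)
      rw [hsplit2]; linarith
    linarith
end

section
/- Let q ≥ 1 and a be natural numbers with a < q, and let g_c, G_cp : ℝ → ℝ → ℝ be kernels, each continuous on the triangular domain D_T := {(t,τ) : 0 ≤ t ≤ T, 0 ≤ τ ≤ t} for every T > 0, with G_cp(t,τ) ≥ g_c(t,τ) ≥ 0 for all 0 ≤ τ ≤ t. Define K(t,σ) := ∫_σ^t G_cp(t,τ)·(τ−σ)^(q−1)/(q−1)! dτ. Assume: (i) [stability] for every ε > 0 there exists δ > 0 such that every continuous φ with |φ(t)| < δ for all t ≥ 0 and every continuous x with x(t) = ∫₀ᵗ K(t,τ)x(τ)dτ + φ(t) for all t ≥ 0 satisfy |x(t)| < ε for all t ≥ 0; (ii) [asymptotic stability] there exists δ₁ > 0 such that every continuous φ with |φ(t)| < δ₁ for all t ≥ 0 and φ(t) → 0 as t → ∞, and every continuous x solving the same equation, satisfy x(t) → 0 as t → ∞; (iii) there exists M ≥ 0 with ∫₀ᵗ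 K(t,σ)dσ ≤ M for all t ≥ 0; (iv) for every T > 0, ∫₀ᵀ K(t,σ)dσ → 0 as t → ∞; (v) there exists M₁ ≥ 0 with ∫₀^(min(t,1)) g_c(t,τ)dτ ≤ M₁ for all t ≥ 0; (vi) lim_{t→∞} ∫₀^(min(t,1)) g_c(t,τ)dτ = 0; (vii) lim_{T→0⁺} sup_{t≥0} ∫₀^(min(t,T)) g_c(t,τ)dτ = 0. Then for every ε > 0 there exists h ≠ 0 such that every continuous u satisfying u(t) = ∫₀ᵗ K(t,τ)u(τ)dτ + (h/a!)·∫₀ᵗ g_c(t,τ)·τ^a dτ for all t ≥ 0 satisfies both |u(t)| ≤ ε for all t ≥ 0 and u(t) → 0 as t → ∞. (Paper's Theorem 8: untraceable stealth of polynomial FDIAs of degree a < q.) -/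
/-!
Put `F t = ∫₀ᵗ g_c(t,τ) τ^a dτ`, so that `u` solves the LVIE with forcing `(h / a!) F`; it suffices
to show that `F` is bounded on `[0, ∞)` and tends to `0`, since then a small `h` puts the forcing
within the thresholds `δ` of (i) and `δ₁` of (ii).

Split `F t` at `τ = 1`. On `[0, min t 1]` we have `τ^a ≤ 1`, so that piece is controlled by (v)
and (vi). For `τ ≥ 1` and `σ ∈ [0, 1/2]` we have `τ - σ ≥ τ / 2`, hence, as `a ≤ q - 1`,
`g_c(t,τ) τ^a ≤ 2^(q-1) G_cp(t,τ) (τ-σ)^(q-1)`. Integrating in `τ` bounds `∫₁ᵗ g_c(t,τ) τ^a dτ` by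
`2^(q-1) (q-1)! K(t,σ)`, and averaging over `σ ∈ [0, 1/2]` by `2^q (q-1)! ∫₀^{1/2} K(t,σ) dσ`,
which is controlled by (iii) and (iv).
-/

open intervalIntegral Set Filter

open MeasureTheory Topology

namespace ContinuousOnTriangles

variable {g : ℝ → ℝ → ℝ}

theorem continuousOn_wedge (hg : ContinuousOnTriangles g) :
    ContinuousOn (Function.uncurry g) {p : ℝ × ℝ | 0 ≤ p.2 ∧ p.2 ≤ p.1} := by
  rintro p ⟨hp₂, hp⟩
  have hp₁ : p.1 < p.1 + 1 := lt_add_one _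
  refine ((hg (p.1 + 1) (by linarith)) p ⟨hp₂.trans hp, hp₁.le, hp₂, hp⟩).mono_of_mem_nhdsWithin ?_
  filter_upwards [self_mem_nhdsWithin,
    mem_nhdsWithin_of_mem_nhds ((isOpen_lt continuous_fst continuous_const).mem_nhds hp₁)]
    with r ⟨hr₂, hr⟩ hr₁
  exact ⟨hr₂.trans hr, le_of_lt hr₁, hr₂, hr⟩

theorem continuousOn_Icc (hg : ContinuousOnTriangles g) (t : ℝ) : ContinuousOn (g t) (Icc 0 t) :=
  hg.continuousOn_wedge.comp (Continuous.prodMk_right t).continuousOn fun _ hτ => hτ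

theorem exists_continuous_extension (hg : ContinuousOnTriangles g) :
    ∃ g' : ℝ → ℝ → ℝ, Continuous (Function.uncurry g') ∧
      ∀ t τ, 0 ≤ τ → τ ≤ t → g' t τ = g t τ := by
  refine ⟨fun t τ => g (max t 0) (min (max τ 0) (max t 0)), ?_, fun t τ hτ hτt => ?_⟩
  · exact hg.continuousOn_wedge.comp_continuous
      (f := fun p : ℝ × ℝ => (max p.1 0, min (max p.2 0) (max p.1 0))) (by fun_prop)
      fun _ => ⟨le_min (le_max_right _ _) (le_max_right _ _), min_le_right _ _⟩
  · simp only [max_eq_left (hτ.trans hτt), max_eq_left hτ, min_eq_left hτt]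

theorem intervalIntegrable (hg : ContinuousOnTriangles g) {t x y : ℝ} (hx : 0 ≤ x) (hxy : x ≤ y)
    (hy : y ≤ t) : IntervalIntegrable (g t) volume x y :=
  ((hg.continuousOn_Icc t).mono (Icc_subset_Icc hx hy)).intervalIntegrable_of_Icc hxy

theorem exists_continuous_eq_integral_mul (hg : ContinuousOnTriangles g) {w : ℝ → ℝ}
    (hw : Continuous w) :
    ∃ F : ℝ → ℝ, Continuous F ∧ ∀ t, 0 ≤ t → F t = ∫ τ in 0..t, g t τ * w τ := by
  obtain ⟨g', hg'c, hg'⟩ := hg.exists_continuous_extension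
  refine ⟨fun t => ∫ τ in 0..t, g' t τ * w τ, by fun_prop, fun t ht => ?_⟩
  refine integral_congr fun τ hτ => ?_
  rw [uIcc_of_le ht] at hτ
  rw [hg' t τ hτ.1 hτ.2]

end ContinuousOnTriangles

/-- `integratedKernel G_cp (q - 1)` is the closed-loop kernel `K` of the paper. -/
noncomputable def integratedKernel (G : ℝ → ℝ → ℝ) (n : ℕ) (t σ : ℝ) : ℝ :=
  ∫ τ in σ..t, G t τ * (τ - σ) ^ n / n.factorial

section integratedKernel

variable {g G : ℝ → ℝ → ℝ} {n a : ℕ} {t σ : ℝ}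

theorem integratedKernel_nonneg (hG : ∀ t τ, 0 ≤ τ → τ ≤ t → 0 ≤ G t τ) (hσ : 0 ≤ σ)
    (hσt : σ ≤ t) : 0 ≤ integratedKernel G n t σ :=
  integral_nonneg hσt fun τ hτ => by
    have := hG t τ (hσ.trans hτ.1) hτ.2
    have := sub_nonneg.2 hτ.1
    positivity

theorem intervalIntegrable_integratedKernel (hG : ContinuousOnTriangles G) (ht : 0 ≤ t) :
    IntervalIntegrable (integratedKernel G n t) volume 0 t := by
  obtain ⟨G', hG'c, hG'⟩ := hG.exists_continuous_extension
  have hcont : Continuous fun σ => ∫ τ in σ..t, G' t τ * (τ - σ) ^ n / n.factorial :=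
    (continuous_parametric_intervalIntegral_of_continuous (a₀ := t) (by fun_prop)
      continuous_id).neg.congr fun σ => (integral_symm t σ).symm
  refine ContinuousOn.intervalIntegrable (hcont.continuousOn.congr fun σ hσ => ?_)
  rw [uIcc_of_le ht] at hσ
  refine integral_congr fun τ hτ => ?_
  rw [uIcc_of_le hσ.2] at hτ
  rw [hG' t τ (hσ.1.trans hτ.1) hτ.2]

theorem pow_le_two_pow_mul_sub_pow {τ : ℝ} (hτ : 1 ≤ τ) (han : a ≤ n) (hσ : σ ≤ 1 / 2) :
    τ ^ a ≤ 2 ^ n * (τ - σ) ^ n :=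
  calc τ ^ a ≤ τ ^ n := pow_le_pow_right₀ hτ han
    _ = 2 ^ n * (τ / 2) ^ n := by rw [div_pow]; field_simp
    _ ≤ 2 ^ n * (τ - σ) ^ n := by gcongr; linarith

theorem integral_one_mul_pow_le_integratedKernel (hg : ContinuousOnTriangles g)
    (hG : ContinuousOnTriangles G) (hg₀ : ∀ t τ, 0 ≤ τ → τ ≤ t → 0 ≤ g t τ)
    (hgG : ∀ t τ, 0 ≤ τ → τ ≤ t → g t τ ≤ G t τ) (han : a ≤ n) (ht : 1 ≤ t) (hσ₀ : 0 ≤ σ)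
    (hσ : σ ≤ 1 / 2) :
    ∫ τ in 1..t, g t τ * τ ^ a ≤ 2 ^ n * n.factorial * integratedKernel G n t σ := by
  have hG₀ : ∀ τ, 0 ≤ τ → τ ≤ t → 0 ≤ G t τ := fun τ h₀ h => (hg₀ t τ h₀ h).trans (hgG t τ h₀ h)
  have hint : ∀ x y, σ ≤ x → x ≤ y → y ≤ t →
      IntervalIntegrable (fun τ => G t τ * (τ - σ) ^ n / n.factorial) volume x y :=
    fun x y hx hxy hy =>
      ((hG.intervalIntegrable (hσ₀.trans hx) hxy hy).mul_continuousOn (by fun_prop)).div_const _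
  have hhead : 0 ≤ ∫ τ in σ..1, G t τ * (τ - σ) ^ n / n.factorial :=
    integral_nonneg (by linarith) fun τ hτ => by
      have := hG₀ τ (hσ₀.trans hτ.1) (hτ.2.trans ht)
      have := sub_nonneg.2 hτ.1
      positivity
  have htail : ∫ τ in 1..t, g t τ * τ ^ a
      ≤ ∫ τ in 1..t, 2 ^ n * n.factorial * (G t τ * (τ - σ) ^ n / n.factorial) := by
    refine integral_mono_on ht
      ((hg.intervalIntegrable zero_le_one ht le_rfl).mul_continuousOn (by fun_prop))
      ((hint 1 t (by linarith) ht le_rfl).const_mul _) fun τ hτ => ?_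
    have hτ₀ : 0 ≤ τ := zero_le_one.trans hτ.1
    have hpow := pow_le_two_pow_mul_sub_pow hτ.1 han hσ
    have := hg₀ t τ hτ₀ hτ.2
    have := hgG t τ hτ₀ hτ.2
    calc g t τ * τ ^ a ≤ G t τ * (2 ^ n * (τ - σ) ^ n) := by gcongr; linarith
      _ = 2 ^ n * n.factorial * (G t τ * (τ - σ) ^ n / n.factorial) := by field_simp
  rw [intervalIntegral.integral_const_mul] at htail
  rw [integratedKernel, ← integral_add_adjacent_intervals (hint σ 1 le_rfl (by linarith) ht)
    (hint 1 t (by linarith) ht le_rfl), mul_add]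
  nlinarith [mul_nonneg (by positivity : (0 : ℝ) ≤ 2 ^ n * n.factorial) hhead]

theorem integral_mul_pow_nonneg (hg₀ : ∀ t τ, 0 ≤ τ → τ ≤ t → 0 ≤ g t τ) (ht : 0 ≤ t) :
    0 ≤ ∫ τ in 0..t, g t τ * τ ^ a :=
  integral_nonneg ht fun τ hτ => mul_nonneg (hg₀ t τ hτ.1 hτ.2) (pow_nonneg hτ.1 a)

theorem integral_mul_pow_le_integral_s7 (hg : ContinuousOnTriangles g)
    (hg₀ : ∀ t τ, 0 ≤ τ → τ ≤ t → 0 ≤ g t τ) {x : ℝ} (hx : 0 ≤ x) (hx₁ : x ≤ 1) (hxt : x ≤ t) :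
    ∫ τ in 0..x, g t τ * τ ^ a ≤ ∫ τ in 0..x, g t τ :=
  integral_mono_on hx ((hg.intervalIntegrable le_rfl hx hxt).mul_continuousOn (by fun_prop))
    (hg.intervalIntegrable le_rfl hx hxt) fun τ hτ =>
      mul_le_of_le_one_right (hg₀ t τ hτ.1 (hτ.2.trans hxt)) (pow_le_one₀ hτ.1 (hτ.2.trans hx₁))

theorem integral_mul_pow_le (hg : ContinuousOnTriangles g) (hG : ContinuousOnTriangles G)
    (hg₀ : ∀ t τ, 0 ≤ τ → τ ≤ t → 0 ≤ g t τ) (hgG : ∀ t τ, 0 ≤ τ → τ ≤ t → g t τ ≤ G t τ)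
    (han : a ≤ n) (ht : 0 ≤ t) :
    ∫ τ in 0..t, g t τ * τ ^ a ≤ (∫ τ in 0..min t 1, g t τ) +
      2 * (2 ^ n * n.factorial) * ∫ σ in 0..min t (1 / 2), integratedKernel G n t σ := by
  rcases le_total t 1 with ht₁ | ht₁
  · have hK : 0 ≤ ∫ σ in 0..min t (1 / 2), integratedKernel G n t σ :=
      integral_nonneg (le_min ht (by norm_num)) fun σ hσ =>
        integratedKernel_nonneg (fun t τ h₀ h => (hg₀ t τ h₀ h).trans (hgG t τ h₀ h)) hσ.1
          (hσ.2.trans (min_le_left _ _))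
    rw [min_eq_left ht₁]
    nlinarith [integral_mul_pow_le_integral_s7 (a := a) hg hg₀ ht ht₁ le_rfl,
      mul_nonneg (by positivity : (0 : ℝ) ≤ 2 * (2 ^ n * n.factorial)) hK]
  · have hhead := integral_mul_pow_le_integral_s7 (a := a) hg hg₀ zero_le_one le_rfl ht₁
    have htail := integral_mono_on (by norm_num : (0 : ℝ) ≤ 1 / 2) intervalIntegrable_const
      (((intervalIntegrable_integratedKernel (n := n) hG ht).mono_set
        (uIcc_subset_uIcc_left (by rw [uIcc_of_le ht]; constructor <;> linarith))).const_mul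
          (2 ^ n * n.factorial))
      fun σ hσ => integral_one_mul_pow_le_integratedKernel (a := a) hg hG hg₀ hgG han ht₁ hσ.1 hσ.2
    rw [intervalIntegral.integral_const, intervalIntegral.integral_const_mul, smul_eq_mul] at htail
    rw [min_eq_right ht₁, min_eq_right (by linarith : (1 / 2 : ℝ) ≤ t),
      ← integral_add_adjacent_intervals
        ((hg.intervalIntegrable le_rfl zero_le_one ht₁).mul_continuousOn (by fun_prop))
        ((hg.intervalIntegrable zero_le_one ht₁ le_rfl).mul_continuousOn (by fun_prop))]
    linarith

theorem abs_integral_mul_pow_le (hg : ContinuousOnTriangles g) (hG : ContinuousOnTriangles G)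
    (hg₀ : ∀ t τ, 0 ≤ τ → τ ≤ t → 0 ≤ g t τ) (hgG : ∀ t τ, 0 ≤ τ → τ ≤ t → g t τ ≤ G t τ)
    (han : a ≤ n) {M M₁ : ℝ} (hM : ∫ σ in 0..t, integratedKernel G n t σ ≤ M)
    (hM₁ : ∫ τ in 0..min t 1, g t τ ≤ M₁) (ht : 0 ≤ t) :
    |∫ τ in 0..t, g t τ * τ ^ a| ≤ M₁ + 2 * (2 ^ n * n.factorial) * M := by
  have hK : ∫ σ in 0..min t (1 / 2), integratedKernel G n t σ ≤ M :=
    (integral_mono_interval le_rfl (le_min ht (by norm_num)) (min_le_left _ _)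
      ((ae_restrict_iff' measurableSet_Ioc).2 (Eventually.of_forall fun σ hσ =>
        integratedKernel_nonneg (fun t τ h₀ h => (hg₀ t τ h₀ h).trans (hgG t τ h₀ h))
          hσ.1.le hσ.2))
      (intervalIntegrable_integratedKernel hG ht)).trans hM
  rw [abs_of_nonneg (integral_mul_pow_nonneg hg₀ ht)]
  nlinarith [integral_mul_pow_le hg hG hg₀ hgG han ht,
    mul_le_mul_of_nonneg_left hK (by positivity : (0 : ℝ) ≤ 2 * (2 ^ n * n.factorial))]

theorem tendsto_integral_mul_pow (hg : ContinuousOnTriangles g) (hG : ContinuousOnTriangles G)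
    (hg₀ : ∀ t τ, 0 ≤ τ → τ ≤ t → 0 ≤ g t τ) (hgG : ∀ t τ, 0 ≤ τ → τ ≤ t → g t τ ≤ G t τ)
    (han : a ≤ n) (hK : Tendsto (fun t => ∫ σ in 0..1 / 2, integratedKernel G n t σ) atTop (𝓝 0))
    (hg₁ : Tendsto (fun t => ∫ τ in 0..min t 1, g t τ) atTop (𝓝 0)) :
    Tendsto (fun t => ∫ τ in 0..t, g t τ * τ ^ a) atTop (𝓝 0) := by
  have hlim : Tendsto (fun t => (∫ τ in 0..min t 1, g t τ) +
      2 * (2 ^ n * n.factorial : ℝ) * ∫ σ in 0..1 / 2, integratedKernel G n t σ) atTop (𝓝 0) := by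
    simpa using hg₁.add (hK.const_mul (2 * (2 ^ n * n.factorial : ℝ)))
  refine squeeze_zero' ((eventually_ge_atTop 0).mono fun t ht => integral_mul_pow_nonneg hg₀ ht)
    ((eventually_ge_atTop 1).mono fun t ht => ?_) hlim
  have := integral_mul_pow_le hg hG hg₀ hgG han (zero_le_one.trans ht)
  rwa [min_eq_right (by linarith : (1 / 2 : ℝ) ≤ t)] at this

end integratedKernel

theorem exists_pos_forall_abs_mul_lt {α : Type*} {s : Set α} {F : α → ℝ} {B δ : ℝ}
    (hF : ∀ x ∈ s, |F x| ≤ B) (hδ : 0 < δ) : ∃ c : ℝ, 0 < c ∧ ∀ x ∈ s, |c * F x| < δ := by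
  refine ⟨δ / (|B| + 1), by positivity, fun x hx => ?_⟩
  rw [abs_mul, abs_of_pos (by positivity : 0 < δ / (|B| + 1))]
  calc δ / (|B| + 1) * |F x| ≤ δ / (|B| + 1) * |B| :=
      mul_le_mul_of_nonneg_left ((hF x hx).trans (le_abs_self B)) (by positivity)
    _ < δ / (|B| + 1) * (|B| + 1) := by gcongr; linarith
    _ = δ := by field_simp

theorem untraceable_stealth_of_polynomial_fdia_general
    (q a : ℕ) (haq : a < q)
    (g_c G_cp : ℝ → ℝ → ℝ)
    (hgc_cont : ContinuousOnTriangles g_c)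
    (hGcp_cont : ContinuousOnTriangles G_cp)
    (hnonneg : ∀ t τ : ℝ, 0 ≤ τ → τ ≤ t → 0 ≤ g_c t τ)
    (hdom : ∀ t τ : ℝ, 0 ≤ τ → τ ≤ t → g_c t τ ≤ G_cp t τ)
    (K : ℝ → ℝ → ℝ)
    (hK : ∀ t σ : ℝ, K t σ =
      ∫ τ in σ..t, G_cp t τ * (τ - σ) ^ (q - 1) / (Nat.factorial (q - 1) : ℝ))
    -- (i) stability of the LVIE
    (hstab : ∀ ε : ℝ, 0 < ε → ∃ δ : ℝ, 0 < δ ∧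
      ∀ φ : ℝ → ℝ, Continuous φ → (∀ t : ℝ, 0 ≤ t → |φ t| < δ) →
      ∀ x : ℝ → ℝ, Continuous x →
        (∀ t : ℝ, 0 ≤ t → x t = (∫ τ in (0:ℝ)..t, K t τ * x τ) + φ t) →
        ∀ t : ℝ, 0 ≤ t → |x t| < ε)
    -- (ii) asymptotic stability of the LVIE
    (hAS : ∃ δ₁ : ℝ, 0 < δ₁ ∧
      ∀ φ : ℝ → ℝ, Continuous φ → (∀ t : ℝ, 0 ≤ t → |φ t| < δ₁) →
        Tendsto φ atTop (nhds 0) →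
      ∀ x : ℝ → ℝ, Continuous x →
        (∀ t : ℝ, 0 ≤ t → x t = (∫ τ in (0:ℝ)..t, K t τ * x τ) + φ t) →
        Tendsto x atTop (nhds 0))
    -- (iii) uniform boundedness of the closed-loop kernel integral
    (M : ℝ)
    (hbound : ∀ t : ℝ, 0 ≤ t → (∫ σ in (0:ℝ)..t, K t σ) ≤ M)
    -- (iv) vanishing of truncated closed-loop kernel integrals
    (hKvanish : ∀ T : ℝ, 0 < T →
      Tendsto (fun t : ℝ => ∫ σ in (0:ℝ)..T, K t σ) atTop (nhds 0))
    -- (v) uniform boundedness of the controller kernel near τ = 0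
    (M₁ : ℝ)
    (hbound₁ : ∀ t : ℝ, 0 ≤ t → (∫ τ in (0:ℝ)..(min t 1), g_c t τ) ≤ M₁)
    -- (vi) vanishing of the controller kernel integral near τ = 0
    (hgcvanish : Tendsto (fun t : ℝ => ∫ τ in (0:ℝ)..(min t 1), g_c t τ) atTop (nhds 0)) :
    ∀ ε : ℝ, 0 < ε → ∃ h : ℝ, h ≠ 0 ∧
      ∀ u : ℝ → ℝ, Continuous u →
        (∀ t : ℝ, 0 ≤ t → u t = (∫ τ in (0:ℝ)..t, K t τ * u τ) +
          (h / (Nat.factorial a : ℝ)) * ∫ τ in (0:ℝ)..t, g_c t τ * τ ^ a) →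
        (∀ t : ℝ, 0 ≤ t → |u t| ≤ ε) ∧ Tendsto u atTop (nhds 0) := by
  intro ε hε
  obtain ⟨δ, hδ, hstab⟩ := hstab ε hε
  obtain ⟨δ₁, hδ₁, hAS⟩ := hAS
  obtain rfl : K = integratedKernel G_cp (q - 1) := funext₂ hK
  have han : a ≤ q - 1 := by omega
  obtain ⟨F, hFc, hF⟩ := hgc_cont.exists_continuous_eq_integral_mul (continuous_pow a)
  obtain ⟨c, hc, hcF⟩ := exists_pos_forall_abs_mul_lt (s := Ici 0) (fun t ht => (hF t ht).symm ▸
    abs_integral_mul_pow_le hgc_cont hGcp_cont hnonneg hdom han (hbound t ht) (hbound₁ t ht) ht)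
    (lt_min hδ hδ₁)
  have hF₀ : Tendsto F atTop (nhds 0) :=
    (tendsto_integral_mul_pow hgc_cont hGcp_cont hnonneg hdom han (hKvanish _ one_half_pos)
      hgcvanish).congr' ((eventually_ge_atTop 0).mono fun t ht => (hF t ht).symm)
  refine ⟨a.factorial * c, by positivity, fun u hu hueq => ?_⟩
  have hu_eq : ∀ t, 0 ≤ t →
      u t = (∫ τ in 0..t, integratedKernel G_cp (q - 1) t τ * u τ) + c * F t := fun t ht => by
    rw [hueq t ht, hF t ht, mul_div_cancel_left₀ _ (by positivity)]
  have hφ : Continuous fun t => c * F t := continuous_const.mul hFc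
  exact ⟨fun t ht => (hstab _ hφ (fun t ht => (hcF t ht).trans_le (min_le_left _ _))
      u hu hu_eq t ht).le,
    hAS _ hφ (fun t ht => (hcF t ht).trans_le (min_le_right _ _))
      (by simpa using hF₀.const_mul c) u hu hu_eq⟩

/-- **Paper's Theorem 8 (untraceable stealth).** Under stability and asymptotic stability
of the closed-loop LVIE with kernel `K(t,σ) = ∫_σ^t G_cp(t,τ)(τ-σ)^(q-1)/(q-1)! dτ`
together with the kernel regularity conditions (iii)–(vii), a polynomial FDIA of degree
`a < q` admits a nonzero weight `h` making it untraceably stealthy with respect to `u`. -/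
theorem untraceable_stealth_of_polynomial_fdia
    (q a : ℕ) (hq : 1 ≤ q) (haq : a < q)
    (g_c G_cp : ℝ → ℝ → ℝ)
    (hgc_cont : ContinuousOnTriangles g_c)
    (hGcp_cont : ContinuousOnTriangles G_cp)
    (hnonneg : ∀ t τ : ℝ, 0 ≤ τ → τ ≤ t → 0 ≤ g_c t τ)
    (hdom : ∀ t τ : ℝ, 0 ≤ τ → τ ≤ t → g_c t τ ≤ G_cp t τ)
    (K : ℝ → ℝ → ℝ)
    (hK : ∀ t σ : ℝ, K t σ =
      ∫ τ in σ..t, G_cp t τ * (τ - σ) ^ (q - 1) / (Nat.factorial (q - 1) : ℝ))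
    -- (i) stability of the LVIE
    (hstab : ∀ ε : ℝ, 0 < ε → ∃ δ : ℝ, 0 < δ ∧
      ∀ φ : ℝ → ℝ, Continuous φ → (∀ t : ℝ, 0 ≤ t → |φ t| < δ) →
      ∀ x : ℝ → ℝ, Continuous x →
        (∀ t : ℝ, 0 ≤ t → x t = (∫ τ in (0:ℝ)..t, K t τ * x τ) + φ t) →
        ∀ t : ℝ, 0 ≤ t → |x t| < ε)
    -- (ii) asymptotic stability of the LVIE
    (hAS : ∃ δ₁ : ℝ, 0 < δ₁ ∧
      ∀ φ : ℝ → ℝ, Continuous φ → (∀ t : ℝ, 0 ≤ t → |φ t| < δ₁) →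
        Tendsto φ atTop (nhds 0) →
      ∀ x : ℝ → ℝ, Continuous x →
        (∀ t : ℝ, 0 ≤ t → x t = (∫ τ in (0:ℝ)..t, K t τ * x τ) + φ t) →
        Tendsto x atTop (nhds 0))
    -- (iii) uniform boundedness of the closed-loop kernel integral
    (M : ℝ) (hM : 0 ≤ M)
    (hbound : ∀ t : ℝ, 0 ≤ t → (∫ σ in (0:ℝ)..t, K t σ) ≤ M)
    -- (iv) vanishing of truncated closed-loop kernel integrals
    (hKvanish : ∀ T : ℝ, 0 < T →
      Tendsto (fun t : ℝ => ∫ σ in (0:ℝ)..T, K t σ) atTop (nhds 0))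
    -- (v) uniform boundedness of the controller kernel near τ = 0
    (M₁ : ℝ) (hM₁ : 0 ≤ M₁)
    (hbound₁ : ∀ t : ℝ, 0 ≤ t → (∫ τ in (0:ℝ)..(min t 1), g_c t τ) ≤ M₁)
    -- (vi) vanishing of the controller kernel integral near τ = 0
    (hgcvanish : Tendsto (fun t : ℝ => ∫ τ in (0:ℝ)..(min t 1), g_c t τ) atTop (nhds 0))
    -- (vii) uniform small-T vanishing of the controller kernel integral
    (hsmall : ∀ ε : ℝ, 0 < ε → ∃ T₀ : ℝ, 0 < T₀ ∧
      ∀ T : ℝ, 0 < T → T < T₀ → ∀ t : ℝ, 0 ≤ t →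
        (∫ τ in (0:ℝ)..(min t T), g_c t τ) < ε) :
    ∀ ε : ℝ, 0 < ε → ∃ h : ℝ, h ≠ 0 ∧
      ∀ u : ℝ → ℝ, Continuous u →
        (∀ t : ℝ, 0 ≤ t → u t = (∫ τ in (0:ℝ)..t, K t τ * u τ) +
          (h / (Nat.factorial a : ℝ)) * ∫ τ in (0:ℝ)..t, g_c t τ * τ ^ a) →
        (∀ t : ℝ, 0 ≤ t → |u t| ≤ ε) ∧ Tendsto u atTop (nhds 0) :=
  untraceable_stealth_of_polynomial_fdia_general q a haq g_c G_cp hgc_cont hGcp_cont hnonneg hdom K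
    hK hstab hAS M hbound hKvanish M₁ hbound₁ hgcvanish
end

section
/- Let q ≥ 1 be a natural number and g : ℝ → ℝ → ℝ a kernel, continuous on the triangular domain D_T := {(t,τ) : 0 ≤ t ≤ T, 0 ≤ τ ≤ t} for every T > 0, with g(t,τ) ≥ 0 for all 0 ≤ τ ≤ t. Assume: (i) lim_{T→0⁺} sup_{t ≥ 0} ∫₀^(min(t,T)) g(t,τ) dτ = 0, and (ii) if q ≥ 2, there exists M ≥ 0 with ∫₀ᵗ g(t,τ)·τ^(q−2) dτ ≤ M for all t ≥ 0. Then the convergence ∫_T^t g(t,τ)·(τ−T)^(q−1) dτ → ∫₀ᵗ g(t,τ)·τ^(q−1) dτ as T → 0⁺ is uniform in t; that is, for every ε > 0 there exists T₀ > 0 such that for all 0 < T < T₀ and all t ≥ T, |∫_T^t g(t,τ)·(τ−T)^(q−1) dτ − ∫₀ᵗ g(t,τ)·τ^(q−1) dτ| < ε. (Paper's Appendix Lemma B.1.) -/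
open intervalIntegral Set

private lemma pow_succ_sub_pow_succ_le (n : ℕ) {a b : ℝ} (ha : 0 ≤ a) (hab : a ≤ b) :
    b ^ (n+1) - a ^ (n+1) ≤ ((n:ℝ)+1) * b ^ n * (b - a) := by
  induction n with
  | zero => simp
  | succ n ih =>
    have hb : 0 ≤ b := ha.trans hab
    have hpow : a ^ (n+1) ≤ b ^ (n+1) := pow_le_pow_left₀ ha hab _
    have hbn : 0 ≤ b ^ n := pow_nonneg hb n
    calc b ^ (n+2) - a ^ (n+2) = b * (b^(n+1) - a^(n+1)) + a^(n+1) * (b - a) := by ring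
      _ ≤ b * (((n:ℝ)+1) * b^n * (b-a)) + b^(n+1) * (b - a) := by
          have h1 := mul_le_mul_of_nonneg_left ih hb
          have h2 := mul_le_mul_of_nonneg_right hpow (by linarith : (0:ℝ) ≤ b - a)
          linarith
      _ = ((n:ℝ)+2) * b^(n+1) * (b-a) := by ring
      _ = (((n+1:ℕ):ℝ)+1) * b^(n+1) * (b-a) := by push_cast; ring

set_option maxHeartbeats 1000000 in
/-- **Paper's Appendix Lemma B.1.** Under the small-`T` uniform vanishing condition (i)
and (for `q ≥ 2`) uniform boundedness of the `(q-2)`-th moment integral (ii), the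
convergence `∫_T^t g(t,τ)(τ-T)^(q-1) dτ → ∫₀ᵗ g(t,τ) τ^(q-1) dτ` as `T → 0⁺`
is uniform in `t`. -/
theorem uniform_convergence_shifted_moment
    (q : ℕ) (hq : 1 ≤ q)
    (g : ℝ → ℝ → ℝ)
    (hg_cont : ContinuousOnTriangles g)
    (hnonneg : ∀ t τ : ℝ, 0 ≤ τ → τ ≤ t → 0 ≤ g t τ)
    -- (i)
    (hsmall : ∀ ε : ℝ, 0 < ε → ∃ T₀ : ℝ, 0 < T₀ ∧
      ∀ T : ℝ, 0 < T → T < T₀ → ∀ t : ℝ, 0 ≤ t →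
        (∫ τ in (0:ℝ)..(min t T), g t τ) < ε)
    -- (ii)
    (hM : 2 ≤ q → ∃ M : ℝ, 0 ≤ M ∧ ∀ t : ℝ, 0 ≤ t →
      (∫ τ in (0:ℝ)..t, g t τ * τ ^ (q - 2)) ≤ M) :
    ∀ ε : ℝ, 0 < ε → ∃ T₀ : ℝ, 0 < T₀ ∧
      ∀ T : ℝ, 0 < T → T < T₀ → ∀ t : ℝ, T ≤ t →
        |(∫ τ in T..t, g t τ * (τ - T) ^ (q - 1)) -
          ∫ τ in (0:ℝ)..t, g t τ * τ ^ (q - 1)| < ε := by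
  intro ε hε
  rcases Nat.lt_or_ge q 2 with hq1 | hq2
  · -- q = 1
    have hq1' : q = 1 := by omega
    subst hq1'
    obtain ⟨T₀, hT₀, hT₀'⟩ := hsmall ε hε
    refine ⟨T₀, hT₀, ?_⟩
    intro T hT hTT₀ t hTt
    have ht : 0 ≤ t := hT.le.trans hTt
    simp only [Nat.sub_self, pow_zero, mul_one]
    have hgc : ContinuousOn (fun τ => g t τ) (uIcc 0 t) := by
      rw [uIcc_of_le ht]
      have h := hg_cont (t+1) (by linarith)
      have heq : (fun τ : ℝ => g t τ) = (fun p : ℝ × ℝ => g p.1 p.2) ∘ (fun τ => (t, τ)) := rfl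
      rw [heq]
      exact h.comp (Continuous.continuousOn (continuous_const.prodMk continuous_id))
        (fun τ hτ => ⟨ht, by linarith, hτ.1, hτ.2⟩)
    have hint : IntervalIntegrable (fun τ => g t τ) MeasureTheory.volume 0 t :=
      hgc.intervalIntegrable
    have hint1 : IntervalIntegrable (fun τ => g t τ) MeasureTheory.volume 0 T :=
      hint.mono_set (by rw [uIcc_of_le hT.le, uIcc_of_le ht]; exact Icc_subset_Icc le_rfl hTt)
    have hint2 : IntervalIntegrable (fun τ => g t τ) MeasureTheory.volume T t :=
      hint.mono_set (by rw [uIcc_of_le hTt, uIcc_of_le ht]; exact Icc_subset_Icc hT.le le_rfl)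
    have hsplit := integral_add_adjacent_intervals hint1 hint2
    have hA : (0:ℝ) ≤ ∫ τ in (0:ℝ)..T, g t τ :=
      integral_nonneg hT.le (fun u hu => hnonneg t u hu.1 (hu.2.trans hTt))
    have hlt := hT₀' T hT hTT₀ t ht
    rw [min_eq_right hTt] at hlt
    have : (∫ τ in T..t, g t τ) - ∫ τ in (0:ℝ)..t, g t τ = -(∫ τ in (0:ℝ)..T, g t τ) := by
      linarith
    rw [this, abs_neg, abs_of_nonneg hA]
    exact hlt
  · -- q ≥ 2
    obtain ⟨M, hM0, hMb⟩ := hM hq2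
    obtain ⟨k, rfl⟩ := Nat.exists_eq_add_of_le hq2
    have h1 : 2 + k - 1 = k + 1 := by omega
    have h2 : 2 + k - 2 = k := by omega
    simp only [h1, h2] at hMb ⊢
    set T₀ : ℝ := ε / (((k:ℝ)+2) * M + 1) with hT₀def
    have hden : (0:ℝ) < ((k:ℝ)+2) * M + 1 := by positivity
    have hT₀pos : 0 < T₀ := div_pos hε hden
    refine ⟨T₀, hT₀pos, ?_⟩
    intro T hT hTT₀ t hTt
    have ht : 0 ≤ t := hT.le.trans hTt
    have hgc : ContinuousOn (fun τ => g t τ) (uIcc 0 t) := by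
      rw [uIcc_of_le ht]
      have h := hg_cont (t+1) (by linarith)
      have heq : (fun τ : ℝ => g t τ) = (fun p : ℝ × ℝ => g p.1 p.2) ∘ (fun τ => (t, τ)) := rfl
      rw [heq]
      exact h.comp (Continuous.continuousOn (continuous_const.prodMk continuous_id))
        (fun τ hτ => ⟨ht, by linarith, hτ.1, hτ.2⟩)
    -- integrability
    have hif1 : IntervalIntegrable (fun τ => g t τ * τ ^ (k+1)) MeasureTheory.volume 0 t :=
      (hgc.mul (continuous_pow (k+1)).continuousOn).intervalIntegrable
    have hif2 : IntervalIntegrable (fun τ => g t τ * (τ - T) ^ (k+1)) MeasureTheory.volume 0 t :=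
      (hgc.mul ((continuous_id.sub continuous_const).pow (k+1)).continuousOn).intervalIntegrable
    have hif3 : IntervalIntegrable (fun τ => g t τ * τ ^ k) MeasureTheory.volume 0 t :=
      (hgc.mul (continuous_pow k).continuousOn).intervalIntegrable
    have hsub1 : uIcc (0:ℝ) T ⊆ uIcc (0:ℝ) t := by
      rw [uIcc_of_le hT.le, uIcc_of_le ht]; exact Icc_subset_Icc le_rfl hTt
    have hsub2 : uIcc T t ⊆ uIcc (0:ℝ) t := by
      rw [uIcc_of_le hTt, uIcc_of_le ht]; exact Icc_subset_Icc hT.le le_rfl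
    have hif1a := hif1.mono_set hsub1
    have hif1b := hif1.mono_set hsub2
    have hif2b := hif2.mono_set hsub2
    have hif3a := hif3.mono_set hsub1
    have hif3b := hif3.mono_set hsub2
    -- bound on ∫₀ᵗ g τ^k pieces
    have hf3nonneg : ∀ u ∈ Icc (0:ℝ) t, 0 ≤ g t u * u ^ k := fun u hu =>
      mul_nonneg (hnonneg t u hu.1 hu.2) (pow_nonneg hu.1 k)
    have hsplit3 := integral_add_adjacent_intervals hif3a hif3b
    have h3a : (0:ℝ) ≤ ∫ τ in (0:ℝ)..T, g t τ * τ ^ k :=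
      integral_nonneg hT.le (fun u hu => hf3nonneg u ⟨hu.1, hu.2.trans hTt⟩)
    have h3b : (0:ℝ) ≤ ∫ τ in T..t, g t τ * τ ^ k :=
      integral_nonneg hTt (fun u hu => hf3nonneg u ⟨hT.le.trans hu.1, hu.2⟩)
    have h3M : (∫ τ in (0:ℝ)..t, g t τ * τ ^ k) ≤ M := hMb t ht
    -- A := ∫₀ᵀ f1 ≤ T * M
    have hA0 : (0:ℝ) ≤ ∫ τ in (0:ℝ)..T, g t τ * τ ^ (k+1) :=
      integral_nonneg hT.le (fun u hu =>
        mul_nonneg (hnonneg t u hu.1 (hu.2.trans hTt)) (pow_nonneg hu.1 _))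
    have hA : (∫ τ in (0:ℝ)..T, g t τ * τ ^ (k+1)) ≤ T * M := by
      have step1 : (∫ τ in (0:ℝ)..T, g t τ * τ ^ (k+1))
          ≤ ∫ τ in (0:ℝ)..T, T * (g t τ * τ ^ k) := by
        refine integral_mono_on hT.le hif1a (hif3a.const_mul T) (fun u hu => ?_)
        have hg0 : 0 ≤ g t u := hnonneg t u hu.1 (hu.2.trans hTt)
        have huk : 0 ≤ u ^ k := pow_nonneg hu.1 k
        have : u ^ (k+1) ≤ T * u ^ k := by
          rw [pow_succ]
          calc u ^ k * u ≤ u ^ k * T := by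
                exact mul_le_mul_of_nonneg_left hu.2 huk
            _ = T * u ^ k := by ring
        nlinarith
      rw [integral_const_mul] at step1
      have : (∫ τ in (0:ℝ)..T, g t τ * τ ^ k) ≤ M := by linarith
      nlinarith [hT.le]
    -- B := ∫_T^t (f1 - f2) ≤ (k+1) * T * M  and ≥ 0
    have hdiffint : IntervalIntegrable
        (fun τ => g t τ * τ ^ (k+1) - g t τ * (τ - T) ^ (k+1)) MeasureTheory.volume T t :=
      hif1b.sub hif2b
    have hB0 : (0:ℝ) ≤ ∫ τ in T..t, (g t τ * τ ^ (k+1) - g t τ * (τ - T) ^ (k+1)) := by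
      refine integral_nonneg hTt (fun u hu => ?_)
      have hg0 : 0 ≤ g t u := hnonneg t u (hT.le.trans hu.1) hu.2
      have hp : (u - T) ^ (k+1) ≤ u ^ (k+1) :=
        pow_le_pow_left₀ (by linarith [hu.1]) (by linarith) _
      nlinarith
    have hB : (∫ τ in T..t, (g t τ * τ ^ (k+1) - g t τ * (τ - T) ^ (k+1)))
        ≤ ((k:ℝ)+1) * T * M := by
      have step1 : (∫ τ in T..t, (g t τ * τ ^ (k+1) - g t τ * (τ - T) ^ (k+1)))
          ≤ ∫ τ in T..t, (((k:ℝ)+1) * T) * (g t τ * τ ^ k) := by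
        refine integral_mono_on hTt hdiffint (hif3b.const_mul _) (fun u hu => ?_)
        have hg0 : 0 ≤ g t u := hnonneg t u (hT.le.trans hu.1) hu.2
        have hkey := pow_succ_sub_pow_succ_le k (by linarith [hu.1] : (0:ℝ) ≤ u - T)
          (by linarith : u - T ≤ u)
        have huk : 0 ≤ u ^ k := pow_nonneg (hT.le.trans hu.1) k
        have : u ^ (k+1) - (u - T) ^ (k+1) ≤ ((k:ℝ)+1) * T * u ^ k := by
          have := hkey
          nlinarith
        nlinarith
      rw [integral_const_mul] at step1
      have h3 : (∫ τ in T..t, g t τ * τ ^ k) ≤ M := by linarith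
      have := mul_le_mul_of_nonneg_left h3 (by positivity : (0:ℝ) ≤ ((k:ℝ)+1) * T)
      linarith
    -- assemble
    have hsplit1 := integral_add_adjacent_intervals hif1a hif1b
    have hsubint : (∫ τ in T..t, (g t τ * τ ^ (k+1) - g t τ * (τ - T) ^ (k+1)))
        = (∫ τ in T..t, g t τ * τ ^ (k+1)) - ∫ τ in T..t, g t τ * (τ - T) ^ (k+1) :=
      integral_sub hif1b hif2b
    have hrewrite : (∫ τ in T..t, g t τ * (τ - T) ^ (k+1)) -
        (∫ τ in (0:ℝ)..t, g t τ * τ ^ (k+1)) =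
        -((∫ τ in (0:ℝ)..T, g t τ * τ ^ (k+1)) +
          ∫ τ in T..t, (g t τ * τ ^ (k+1) - g t τ * (τ - T) ^ (k+1))) := by
      rw [hsubint]; linarith
    rw [hrewrite, abs_neg, abs_of_nonneg (by linarith)]
    have hfin : T * M + ((k:ℝ)+1) * T * M < ε := by
      have hT₀ε : (((k:ℝ)+2) * M + 1) * T₀ = ε := by
        rw [hT₀def]; field_simp
      nlinarith [mul_lt_mul_of_pos_left hTT₀ hden]
    linarith
end

section
/- Let q ≥ 1 and a be natural numbers, h ∈ ℝ, and let g_c, g_p : ℝ → ℝ → ℝ be kernels, each continuous on the triangular domain D_T := {(t,τ) : 0 ≤ t ≤ T, 0 ≤ τ ≤ t} for every T > 0. Let u_q : ℝ → ℝ be continuous, and define u_p(t) := ∫₀ᵗ (t−τ)^(q−1)/(q−1)! · u_q(τ) dτ and y_p(t) := ∫₀ᵗ g_p(t,τ)·u_p(τ) dτ. Suppose u_q satisfies the closed-loop relation u_q(t) = ∫₀ᵗ g_c(t,σ)·( y_p(σ) + (h/a!)·σ^a ) dσ for all t ≥ 0. Then u_q satisfies the linear Volterra integral equation of the second kind u_q(t)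 = ∫₀ᵗ K(t,τ)·u_q(τ) dτ + (h/a!)·∫₀ᵗ g_c(t,τ)·τ^a dτ for all t ≥ 0, where K(t,τ) := ∫_τ^t G_cp(t,σ)·(σ−τ)^(q−1)/(q−1)! dσ with G_cp(t,σ) := ∫_σ^t g_c(t,s)·g_p(s,σ) ds. -/
open intervalIntegral Set
open MeasureTheory

lemma my_triangle_swap {t : ℝ} (ht : 0 ≤ t) {F : ℝ → ℝ → ℝ}
    (hF : Continuous fun p : ℝ × ℝ => F p.1 p.2) :
    (∫ σ in (0:ℝ)..t, ∫ τ in (0:ℝ)..σ, F σ τ) =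
      ∫ τ in (0:ℝ)..t, ∫ σ in τ..t, F σ τ := by
  classical
  set μ := volume.restrict (Ioc (0:ℝ) t) with hμ
  have hS : MeasurableSet {p : ℝ × ℝ | p.2 ≤ p.1} :=
    measurableSet_le measurable_snd measurable_fst
  set H : ℝ → ℝ → ℝ := fun σ τ => (Iic σ).indicator (F σ) τ with hH
  have hunc : Function.uncurry H = ({p : ℝ × ℝ | p.2 ≤ p.1}).indicator
      (fun p : ℝ × ℝ => F p.1 p.2) := by
    ext p
    simp [H, Function.uncurry, Set.indicator_apply]
  have hint : Integrable (Function.uncurry H) (μ.prod μ) := by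
    rw [hunc, integrable_indicator_iff hS]
    apply Integrable.integrableOn
    rw [hμ, Measure.prod_restrict, ← Measure.volume_eq_prod]
    exact (hF.continuousOn.integrableOn_compact (isCompact_Icc.prod isCompact_Icc)).mono_set
      (prod_mono Ioc_subset_Icc_self Ioc_subset_Icc_self)
  have swap := MeasureTheory.integral_integral_swap hint
  have hL : (∫ σ in (0:ℝ)..t, ∫ τ in (0:ℝ)..σ, F σ τ) = ∫ σ, (∫ τ, H σ τ ∂μ) ∂μ := by
    rw [intervalIntegral.integral_of_le ht]
    apply setIntegral_congr_fun measurableSet_Ioc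
    intro σ hσ
    show (∫ τ in (0:ℝ)..σ, F σ τ) = ∫ τ, H σ τ ∂μ
    rw [intervalIntegral.integral_of_le hσ.1.le, hμ]
    rw [MeasureTheory.integral_indicator measurableSet_Iic, Measure.restrict_restrict measurableSet_Iic]
    have hset : Iic σ ∩ Ioc (0:ℝ) t = Ioc 0 σ := by
      ext x
      simp only [mem_inter_iff, mem_Iic, mem_Ioc]
      constructor
      · rintro ⟨h1, h2, h3⟩; exact ⟨h2, h1⟩
      · rintro ⟨h1, h2⟩; exact ⟨h2, h1, h2.trans hσ.2⟩
    rw [hset]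
  have hR : (∫ τ in (0:ℝ)..t, ∫ σ in τ..t, F σ τ) = ∫ τ, (∫ σ, H σ τ ∂μ) ∂μ := by
    rw [intervalIntegral.integral_of_le ht]
    apply setIntegral_congr_fun measurableSet_Ioc
    intro τ hτ
    show (∫ σ in τ..t, F σ τ) = ∫ σ, H σ τ ∂μ
    have : ∀ σ, H σ τ = (Ici τ).indicator (fun σ => F σ τ) σ := by
      intro σ; simp [H, Set.indicator_apply]
    simp only [this, hμ]
    rw [MeasureTheory.integral_indicator measurableSet_Ici, Measure.restrict_restrict measurableSet_Ici]
    have hset : Ici τ ∩ Ioc (0:ℝ) t = Icc τ t := by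
      ext x
      simp only [mem_inter_iff, mem_Ici, mem_Ioc, mem_Icc]
      constructor
      · rintro ⟨h1, h2, h3⟩; exact ⟨h1, h3⟩
      · rintro ⟨h1, h2⟩; exact ⟨h1, hτ.1.trans_le h1, h2⟩
    rw [hset, intervalIntegral.integral_of_le hτ.2, MeasureTheory.integral_Icc_eq_integral_Ioc]
  rw [hL, hR]
  exact swap

/-- Tietze extension from a closed subset of the plane. -/
lemma my_exists_ext {f : ℝ × ℝ → ℝ} {s : Set (ℝ × ℝ)} (hs : IsClosed s)
    (hf : ContinuousOn f s) :
    ∃ g : ℝ × ℝ → ℝ, Continuous g ∧ ∀ p ∈ s, g p = f p := by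
  obtain ⟨g, hg⟩ := ContinuousMap.exists_restrict_eq (Y := ℝ) hs ⟨s.restrict f, hf.restrict⟩
  refine ⟨g, g.continuous, fun p hp => ?_⟩
  exact DFunLike.congr_fun hg ⟨p, hp⟩


/-- **LVIE representation of the monitored signal `u_q` (equation (17) of the paper).**
If `u_q` satisfies the closed-loop relation
`u_q(t) = ∫₀ᵗ g_c(t,σ)(y_p(σ) + (h/a!) σ^a) dσ`, where
`u_p(t) = ∫₀ᵗ (t-τ)^(q-1)/(q-1)! u_q(τ) dτ` and `y_p(t) = ∫₀ᵗ g_p(t,τ) u_p(τ) dτ`,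
then `u_q` satisfies the linear Volterra integral equation of the second kind
`u_q(t) = ∫₀ᵗ K(t,τ) u_q(τ) dτ + (h/a!) ∫₀ᵗ g_c(t,τ) τ^a dτ`,
where `K(t,τ) = ∫_τ^t G_cp(t,σ)(σ-τ)^(q-1)/(q-1)! dσ` and
`G_cp(t,σ) = ∫_σ^t g_c(t,s) g_p(s,σ) ds`. -/
theorem lvie_representation_of_uq
    (q a : ℕ) (hq : 1 ≤ q) (h : ℝ)
    (g_c g_p : ℝ → ℝ → ℝ)
    (hgc_cont : ContinuousOnTriangles g_c)
    (hgp_cont : ContinuousOnTriangles g_p)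
    (u_q : ℝ → ℝ) (hu_q : Continuous u_q)
    (u_p y_p : ℝ → ℝ)
    (hup : ∀ t : ℝ, u_p t =
      ∫ τ in (0:ℝ)..t, (t - τ) ^ (q - 1) / (Nat.factorial (q - 1) : ℝ) * u_q τ)
    (hyp : ∀ t : ℝ, y_p t = ∫ τ in (0:ℝ)..t, g_p t τ * u_p τ)
    (hclosed : ∀ t : ℝ, 0 ≤ t →
      u_q t = ∫ σ in (0:ℝ)..t, g_c t σ * (y_p σ + (h / (Nat.factorial a : ℝ)) * σ ^ a))
    (G_cp : ℝ → ℝ → ℝ)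
    (hGcp : ∀ t σ : ℝ, G_cp t σ = ∫ s in σ..t, g_c t s * g_p s σ)
    (K : ℝ → ℝ → ℝ)
    (hK : ∀ t τ : ℝ, K t τ =
      ∫ σ in τ..t, G_cp t σ * (σ - τ) ^ (q - 1) / (Nat.factorial (q - 1) : ℝ)) :
    ∀ t : ℝ, 0 ≤ t →
      u_q t = (∫ τ in (0:ℝ)..t, K t τ * u_q τ) +
        (h / (Nat.factorial a : ℝ)) * ∫ τ in (0:ℝ)..t, g_c t τ * τ ^ a := by
  intro t ht
  rcases eq_or_lt_of_le ht with rfl | htpos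
  · simpa using hclosed 0 le_rfl
  set c : ℝ := h / (Nat.factorial a : ℝ) with hc
  set D : Set (ℝ × ℝ) := {p : ℝ × ℝ | 0 ≤ p.1 ∧ p.1 ≤ t ∧ 0 ≤ p.2 ∧ p.2 ≤ p.1} with hDdef
  have hD : IsClosed D := by
    have : D = {p : ℝ × ℝ | 0 ≤ p.1} ∩ ({p : ℝ × ℝ | p.1 ≤ t} ∩
        ({p : ℝ × ℝ | 0 ≤ p.2} ∩ {p : ℝ × ℝ | p.2 ≤ p.1})) := rfl
    rw [this]
    exact (isClosed_le continuous_const continuous_fst).inter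
      ((isClosed_le continuous_fst continuous_const).inter
        ((isClosed_le continuous_const continuous_snd).inter
          (isClosed_le continuous_snd continuous_fst)))
  obtain ⟨Gc, hGc_cont, hGc_eq⟩ := my_exists_ext hD (hgc_cont t htpos)
  obtain ⟨Gp, hGp_cont, hGp_eq⟩ := my_exists_ext hD (hgp_cont t htpos)
  -- the fractional-power kernel of the integrator chain
  set k : ℝ → ℝ → ℝ := fun x τ => (x - τ) ^ (q - 1) / (Nat.factorial (q - 1) : ℝ) with hk
  have hk_cont : Continuous fun p : ℝ × ℝ => k p.1 p.2 :=
    ((continuous_fst.sub continuous_snd).pow _).div_const _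
  -- continuity of u_p
  have hup_cont : Continuous u_p := by
    have hcont : Continuous (Function.uncurry fun x τ => k x τ * u_q τ) :=
      hk_cont.mul (hu_q.comp continuous_snd)
    have : u_p = fun x => ∫ τ in (0:ℝ)..x, k x τ * u_q τ := funext hup
    rw [this]
    exact intervalIntegral.continuous_parametric_intervalIntegral_of_continuous hcont continuous_id
  -- a globally continuous version of y_p
  set Yp : ℝ → ℝ := fun x => ∫ τ in (0:ℝ)..x, Gp (x, τ) * u_p τ with hYpdef
  have hYp_cont : Continuous Yp := by
    have hcont : Continuous (Function.uncurry fun x τ => Gp (x, τ) * u_p τ) := by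
      exact (hGp_cont.comp (continuous_fst.prodMk continuous_snd)).mul
        (hup_cont.comp continuous_snd)
    exact intervalIntegral.continuous_parametric_intervalIntegral_of_continuous hcont continuous_id
  have hYp_eq : ∀ σ ∈ Icc (0:ℝ) t, Yp σ = y_p σ := by
    intro σ hσ
    rw [hyp σ, hYpdef]
    apply intervalIntegral.integral_congr
    intro τ hτ
    beta_reduce
    rw [uIcc_of_le hσ.1] at hτ
    have : (σ, τ) ∈ D := ⟨hσ.1, hσ.2, hτ.1, hτ.2⟩
    simp only [hGp_eq _ this]
  -- a globally continuous version of σ ↦ G_cp t σ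
  set GG : ℝ → ℝ := fun σ => ∫ s in σ..t, Gc (t, s) * Gp (s, σ) with hGGdef
  have hGG_cont : Continuous GG := by
    have hcont : Continuous (Function.uncurry fun σ s => Gc (t, s) * Gp (s, σ)) := by
      exact (hGc_cont.comp (continuous_const.prodMk continuous_snd)).mul
        (hGp_cont.comp (continuous_snd.prodMk continuous_fst))
    have h1 : Continuous fun σ => ∫ s in t..σ, Gc (t, s) * Gp (s, σ) :=
      intervalIntegral.continuous_parametric_intervalIntegral_of_continuous
        (a₀ := t) hcont continuous_id
    have : GG = fun σ => -∫ s in t..σ, Gc (t, s) * Gp (s, σ) := by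
      funext σ
      rw [hGGdef]
      exact intervalIntegral.integral_symm _ _
    rw [this]
    exact h1.neg
  have hGG_eq : ∀ σ ∈ Icc (0:ℝ) t, GG σ = G_cp t σ := by
    intro σ hσ
    rw [hGcp t σ, hGGdef]
    apply intervalIntegral.integral_congr
    intro s hs
    beta_reduce
    rw [uIcc_of_le hσ.2] at hs
    have h1 : ((t : ℝ), s) ∈ D := ⟨ht, le_rfl, hσ.1.trans hs.1, hs.2⟩
    have h2 : (s, σ) ∈ D := ⟨hσ.1.trans hs.1, hs.2, hσ.1, hs.1⟩
    rw [hGc_eq _ h1, hGp_eq _ h2]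
  -- main computation
  have step1 : u_q t = (∫ σ in (0:ℝ)..t, Gc (t, σ) * Yp σ) +
      c * ∫ σ in (0:ℝ)..t, g_c t σ * σ ^ a := by
    rw [hclosed t ht]
    have e1 : (∫ σ in (0:ℝ)..t, g_c t σ * (y_p σ + c * σ ^ a)) =
        ∫ σ in (0:ℝ)..t, (Gc (t, σ) * Yp σ + c * (Gc (t, σ) * σ ^ a)) := by
      apply intervalIntegral.integral_congr
      intro σ hσ
      beta_reduce
      rw [uIcc_of_le ht] at hσ
      have hmem : ((t : ℝ), σ) ∈ D := ⟨ht, le_rfl, hσ.1, hσ.2⟩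
      rw [← hGc_eq _ hmem, hYp_eq σ hσ]
      ring
    rw [e1, intervalIntegral.integral_add, intervalIntegral.integral_const_mul]
    · congr 1
      congr 1
      apply intervalIntegral.integral_congr
      intro σ hσ
      beta_reduce
      rw [uIcc_of_le ht] at hσ
      have hmem : ((t : ℝ), σ) ∈ D := ⟨ht, le_rfl, hσ.1, hσ.2⟩
      rw [hGc_eq _ hmem]
    · exact ((hGc_cont.comp (Continuous.prodMk_right t)).mul hYp_cont).intervalIntegrable _ _
    · exact (continuous_const.mul ((hGc_cont.comp (Continuous.prodMk_right t)).mul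
        (continuous_pow a))).intervalIntegrable _ _
  -- now handle the double integral term
  have step2 : (∫ σ in (0:ℝ)..t, Gc (t, σ) * Yp σ) =
      ∫ τ in (0:ℝ)..t, GG τ * u_p τ := by
    have e1 : (∫ σ in (0:ℝ)..t, Gc (t, σ) * Yp σ) =
        ∫ σ in (0:ℝ)..t, ∫ τ in (0:ℝ)..σ, Gc (t, σ) * (Gp (σ, τ) * u_p τ) := by
      apply intervalIntegral.integral_congr
      intro σ _
      beta_reduce
      rw [intervalIntegral.integral_const_mul]
    rw [e1, my_triangle_swap ht]
    · apply intervalIntegral.integral_congr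
      intro τ _
      beta_reduce
      have : (∫ σ in τ..t, Gc (t, σ) * (Gp (σ, τ) * u_p τ)) =
          ∫ σ in τ..t, (Gc (t, σ) * Gp (σ, τ)) * u_p τ := by
        apply intervalIntegral.integral_congr
        intro σ _
        beta_reduce
        ring
      rw [this, intervalIntegral.integral_mul_const]
    · exact (hGc_cont.comp (continuous_const.prodMk continuous_fst)).mul
        ((hGp_cont.comp (continuous_fst.prodMk continuous_snd)).mul
          (hup_cont.comp continuous_snd))
  have step3 : (∫ τ in (0:ℝ)..t, GG τ * u_p τ) =
      ∫ x in (0:ℝ)..t, K t x * u_q x := by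
    have e1 : (∫ τ in (0:ℝ)..t, GG τ * u_p τ) =
        ∫ τ in (0:ℝ)..t, ∫ x in (0:ℝ)..τ, GG τ * (k τ x * u_q x) := by
      apply intervalIntegral.integral_congr
      intro τ _
      beta_reduce
      rw [hup τ, intervalIntegral.integral_const_mul]
    rw [e1, my_triangle_swap ht]
    · apply intervalIntegral.integral_congr
      intro x hx
      beta_reduce
      rw [uIcc_of_le ht] at hx
      have e2 : (∫ τ in x..t, GG τ * (k τ x * u_q x)) =
          ∫ τ in x..t, (GG τ * k τ x) * u_q x := by
        apply intervalIntegral.integral_congr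
        intro τ _
        beta_reduce
        ring
      rw [e2, intervalIntegral.integral_mul_const]
      congr 1
      rw [hK t x]
      apply intervalIntegral.integral_congr
      intro σ hσ
      beta_reduce
      rw [uIcc_of_le hx.2] at hσ
      have hσmem : σ ∈ Icc (0:ℝ) t := ⟨hx.1.trans hσ.1, hσ.2⟩
      rw [hGG_eq σ hσmem, hk]
      ring
    · exact (hGG_cont.comp continuous_fst).mul (hk_cont.mul (hu_q.comp continuous_snd))
  rw [step1, step2, step3]
end

section
/- Let q ≥ 2 be a natural number, g : ℝ → ℝ → ℝ a kernel, continuous on the triangular domain D_T := {(t,τ) : 0 ≤ t ≤ T, 0 ≤ τ ≤ t} for every T > 0, with g(t,τ) ≥ 0 for all 0 ≤ τ ≤ t. Then for all real T, t with 0 < T ≤ t: |∫_T^t g(t,τ)·(τ−T)^(q−1) dτ − ∫₀ᵗ g(t,τ)·τ^(q−1) dτ| ≤ T·q·∫₀ᵗ g(t,τ)·τ^(q−2) dτ. (The key estimate in the proof of the paper's Appendix Lemma B.1.) -/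
open intervalIntegral Set

private lemma pow_sub_pow_le_aux {a b : ℝ} (hb : 0 ≤ b) (hab : b ≤ a) (n : ℕ) :
    a ^ n - b ^ n ≤ (n : ℝ) * a ^ (n - 1) * (a - b) := by
  have ha : 0 ≤ a := hb.trans hab
  have key := geom_sum₂_mul a b n
  rw [← key]
  have hsum : (∑ i ∈ Finset.range n, a ^ i * b ^ (n - 1 - i)) ≤ (n : ℝ) * a ^ (n - 1) := by
    calc (∑ i ∈ Finset.range n, a ^ i * b ^ (n - 1 - i))
        ≤ ∑ i ∈ Finset.range n, a ^ (n - 1) := by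
          apply Finset.sum_le_sum
          intro i hi
          have hi' : i < n := Finset.mem_range.mp hi
          calc a ^ i * b ^ (n - 1 - i) ≤ a ^ i * a ^ (n - 1 - i) := by
                exact mul_le_mul_of_nonneg_left (pow_le_pow_left₀ hb hab _) (pow_nonneg ha _)
            _ = a ^ (n - 1) := by rw [← pow_add]; congr 1; omega
      _ = (n : ℝ) * a ^ (n - 1) := by
          rw [Finset.sum_const, Finset.card_range, nsmul_eq_mul]
  exact mul_le_mul_of_nonneg_right hsum (by linarith)

/-- **Key estimate in the proof of the paper's Appendix Lemma B.1.** For `q ≥ 2` and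
`0 < T ≤ t`, the difference between the shifted and unshifted `(q-1)`-th moment
integrals is bounded by `T q ∫₀ᵗ g(t,τ) τ^(q-2) dτ`. -/
theorem shifted_moment_estimate
    (q : ℕ) (hq : 2 ≤ q)
    (g : ℝ → ℝ → ℝ)
    (hg_cont : ContinuousOnTriangles g)
    (hnonneg : ∀ t τ : ℝ, 0 ≤ τ → τ ≤ t → 0 ≤ g t τ) :
    ∀ T t : ℝ, 0 < T → T ≤ t →
      |(∫ τ in T..t, g t τ * (τ - T) ^ (q - 1)) -
        ∫ τ in (0:ℝ)..t, g t τ * τ ^ (q - 1)| ≤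
      T * (q : ℝ) * ∫ τ in (0:ℝ)..t, g t τ * τ ^ (q - 2) := by
  intro T t hT hTt
  have ht : (0:ℝ) < t := hT.trans_le hTt
  -- continuity of τ ↦ g t τ on [0, t]
  have hf : ContinuousOn (fun τ => g t τ) (Icc 0 t) := by
    have := (hg_cont t ht).comp
      (Continuous.continuousOn (continuous_const.prodMk continuous_id) :
        ContinuousOn (fun τ : ℝ => ((t, τ) : ℝ × ℝ)) (Icc 0 t))
      (fun τ hτ => ⟨ht.le, le_refl t, hτ.1, hτ.2⟩)
    exact this
  -- integrability helpers
  have hint : ∀ (k : ℕ) (a b : ℝ), a ∈ Icc (0:ℝ) t → b ∈ Icc (0:ℝ) t →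
      IntervalIntegrable (fun τ => g t τ * τ ^ k) MeasureTheory.volume a b := by
    intro k a b ha hb
    apply ContinuousOn.intervalIntegrable
    apply ContinuousOn.mono (hf.mul (continuousOn_pow k))
    intro x hx
    rcases Set.mem_uIcc.mp hx with ⟨h1, h2⟩ | ⟨h1, h2⟩
    · exact ⟨ha.1.trans h1, h2.trans hb.2⟩
    · exact ⟨hb.1.trans h1, h2.trans ha.2⟩
  have hmemT : T ∈ Icc (0:ℝ) t := ⟨hT.le, hTt⟩
  have hmem0 : (0:ℝ) ∈ Icc (0:ℝ) t := ⟨le_refl _, ht.le⟩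
  have hmemt : t ∈ Icc (0:ℝ) t := ⟨ht.le, le_refl _⟩
  have hishift : IntervalIntegrable (fun τ => g t τ * (τ - T) ^ (q - 1))
      MeasureTheory.volume T t := by
    apply ContinuousOn.intervalIntegrable
    apply ContinuousOn.mono (hf.mul (((continuousOn_id.sub continuousOn_const).pow (q-1))))
    intro x hx
    rw [Set.uIcc_of_le hTt] at hx
    exact ⟨hT.le.trans hx.1, hx.2⟩
  -- nonnegativity of g t τ on [0,t]
  have hg0 : ∀ τ ∈ Icc (0:ℝ) t, 0 ≤ g t τ := fun τ hτ => hnonneg t τ hτ.1 hτ.2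
  set B1 := ∫ τ in (0:ℝ)..T, g t τ * τ ^ (q - 1) with hB1
  set B2 := ∫ τ in T..t, g t τ * τ ^ (q - 1) with hB2
  set A := ∫ τ in T..t, g t τ * (τ - T) ^ (q - 1) with hA
  set C1 := ∫ τ in (0:ℝ)..T, g t τ * τ ^ (q - 2) with hC1
  set C2 := ∫ τ in T..t, g t τ * τ ^ (q - 2) with hC2
  have hBsplit : (∫ τ in (0:ℝ)..t, g t τ * τ ^ (q - 1)) = B1 + B2 :=
    (integral_add_adjacent_intervals (hint _ _ _ hmem0 hmemT) (hint _ _ _ hmemT hmemt)).symm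
  have hCsplit : (∫ τ in (0:ℝ)..t, g t τ * τ ^ (q - 2)) = C1 + C2 :=
    (integral_add_adjacent_intervals (hint _ _ _ hmem0 hmemT) (hint _ _ _ hmemT hmemt)).symm
  -- nonnegativity of the integrals
  have hB1nn : 0 ≤ B1 := by
    apply integral_nonneg hT.le
    intro τ hτ
    exact mul_nonneg (hg0 τ ⟨hτ.1, hτ.2.trans hTt⟩) (pow_nonneg hτ.1 _)
  have hC1nn : 0 ≤ C1 := by
    apply integral_nonneg hT.le
    intro τ hτ
    exact mul_nonneg (hg0 τ ⟨hτ.1, hτ.2.trans hTt⟩) (pow_nonneg hτ.1 _)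
  have hC2nn : 0 ≤ C2 := by
    apply integral_nonneg hTt
    intro τ hτ
    exact mul_nonneg (hg0 τ ⟨hT.le.trans hτ.1, hτ.2⟩) (pow_nonneg (hT.le.trans hτ.1) _)
  -- A ≤ B2
  have hAB2 : A ≤ B2 := by
    apply integral_mono_on hTt hishift (hint _ _ _ hmemT hmemt)
    intro τ hτ
    have hτ0 : 0 ≤ τ := hT.le.trans hτ.1
    exact mul_le_mul_of_nonneg_left
      (pow_le_pow_left₀ (by linarith [hτ.1]) (by linarith) _)
      (hg0 τ ⟨hτ0, hτ.2⟩)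
  -- bound B1 ≤ T * C1
  have hB1C1 : B1 ≤ T * C1 := by
    rw [hB1, hC1, ← integral_const_mul]
    apply integral_mono_on hT.le (hint _ _ _ hmem0 hmemT)
      ((hint _ _ _ hmem0 hmemT).const_mul T)
    intro τ hτ
    have : τ ^ (q - 1) ≤ T * τ ^ (q - 2) := by
      have : τ ^ (q - 1) = τ * τ ^ (q - 2) := by
        rw [← pow_succ']; congr 1; omega
      rw [this]
      exact mul_le_mul_of_nonneg_right hτ.2 (pow_nonneg hτ.1 _)
    calc g t τ * τ ^ (q - 1) ≤ g t τ * (T * τ ^ (q - 2)) :=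
          mul_le_mul_of_nonneg_left this (hg0 τ ⟨hτ.1, hτ.2.trans hTt⟩)
      _ = T * (g t τ * τ ^ (q - 2)) := by ring
  -- bound B2 - A ≤ (q-1) * T * C2
  have hB2A : B2 - A ≤ ((q : ℝ) - 1) * T * C2 := by
    rw [hB2, hA, ← integral_sub (hint _ _ _ hmemT hmemt) hishift, hC2, ← integral_const_mul]
    apply integral_mono_on hTt
      ((hint _ _ _ hmemT hmemt).sub hishift)
      ((hint _ _ _ hmemT hmemt).const_mul _)
    intro τ hτ
    have hτ0 : 0 ≤ τ := hT.le.trans hτ.1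
    have key : τ ^ (q - 1) - (τ - T) ^ (q - 1) ≤ ((q : ℝ) - 1) * (τ ^ (q - 2) * T) := by
      have h := pow_sub_pow_le_aux (a := τ) (b := τ - T)
        (by linarith [hτ.1]) (by linarith) (q - 1)
      have hcast : ((q - 1 : ℕ) : ℝ) = (q : ℝ) - 1 := by
        push_cast [Nat.cast_sub (by omega : 1 ≤ q)]; ring
      have hexp : (q - 1) - 1 = q - 2 := by omega
      rw [hcast, hexp] at h
      calc τ ^ (q - 1) - (τ - T) ^ (q - 1)
          ≤ ((q:ℝ) - 1) * τ ^ (q - 2) * (τ - (τ - T)) := h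
        _ = ((q:ℝ) - 1) * (τ ^ (q - 2) * T) := by ring
    have hgnn := hg0 τ ⟨hτ0, hτ.2⟩
    calc g t τ * τ ^ (q - 1) - g t τ * (τ - T) ^ (q - 1)
        = g t τ * (τ ^ (q - 1) - (τ - T) ^ (q - 1)) := by ring
      _ ≤ g t τ * (((q:ℝ) - 1) * (τ ^ (q - 2) * T)) := mul_le_mul_of_nonneg_left key hgnn
      _ = ((q:ℝ) - 1) * T * (g t τ * τ ^ (q - 2)) := by ring
  have hq1 : (1:ℝ) ≤ (q:ℝ) := by exact_mod_cast (by omega : 1 ≤ q)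
  have habs : |A - (B1 + B2)| = B1 + B2 - A := by
    rw [abs_sub_comm, abs_of_nonneg (by linarith)]
  rw [hBsplit, habs, hCsplit]
  have hC2le : C2 ≤ C1 + C2 := by linarith
  nlinarith [mul_le_mul_of_nonneg_left hC2le (by nlinarith : 0 ≤ ((q:ℝ) - 1) * T),
    mul_le_mul_of_nonneg_left hC1nn (mul_nonneg hT.le (by linarith : (0:ℝ) ≤ (q:ℝ)))]
end
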